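/- arXiv:2210.11648 — 4 statements merged into one kernel-verified Lean document; each statement's English description precedes it below -/
import Mathlib

section
/- Let x* be any optimal solution of the convex program P^g for some differentiable, strictly increasing, strictly convex function g: ℝ → ℝ, and let μ be any finitely supported probability distribution over matchings of G[D1,S] whose edge marginals are x*. Then for every subset R ⊆ D2 of realized second-stage demand vertices, E_{M1∼μ}[ Σ_{j∈V_S(M1)} w_j + maxWM(R, S∖V_S(M1)) ] ≥ (3/4)·maxWM(D1∪R, S). In particular, Algorithm 1 (play such a random M1 in the first stage and a maximum supply-weighted matching between the realized second-stage demand and the still-unmatched supply in the second stage) is 3/4-competitive against the optimum offline benchmark OPT_offline = E_R[maxWM(D1∪R,S)] in the vertex-weighted two-stage stochastic matching problem, for any realization process of R. -/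
open scoped BigOperators

/-- `M` is a matching contained in the edge set `Ed`:
a set of pairwise vertex-disjoint edges. -/
def IsMatchingIn {D S : Type*} (Ed M : Finset (D × S)) : Prop :=
  M ⊆ Ed ∧ ∀ e ∈ M, ∀ e' ∈ M, e ≠ e' → e.1 ≠ e'.1 ∧ e.2 ≠ e'.2

/-- `M` is a matching of `Ed` using only edges between `A` and `T`. -/
def IsMatchingBtw {D S : Type*} (Ed : Finset (D × S)) (A : Finset D) (T : Finset S)
    (M : Finset (D × S)) : Prop :=
  IsMatchingIn Ed M ∧ ∀ e ∈ M, e.1 ∈ A ∧ e.2 ∈ T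

/-- The set of supply vertices covered by the edge set `M`. -/
def suppliesOf {D S : Type*} [DecidableEq S] (M : Finset (D × S)) : Finset S :=
  M.image Prod.snd

/-- `maxWM w Ed A T`: the maximum, over matchings using only edges between `A` and `T`,
of the total weight of matched supply vertices. -/
noncomputable def maxWM {D S : Type*} (w : S → ℝ) (Ed : Finset (D × S))
    (A : Finset D) (T : Finset S) : ℝ :=
  sSup ((fun M => ∑ e ∈ M, w e.2) '' {M | IsMatchingBtw Ed A T M})

/-- A fractional matching of `G[D1, S]`. -/
def IsFracMatching {D S : Type*} (Ed : Finset (D × S)) (D1 : Finset D) (Ssup : Finset S)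
    (x : D → S → ℝ) : Prop :=
  (∀ i j, 0 ≤ x i j) ∧ (∀ i j, (i, j) ∉ Ed → x i j = 0) ∧
    (∀ i ∈ D1, ∑ j ∈ Ssup, x i j ≤ 1) ∧ ∀ j ∈ Ssup, ∑ i ∈ D1, x i j ≤ 1

/-- The objective of the convex program `P^g`. -/
noncomputable def PgObj {D S : Type*} (g : ℝ → ℝ) (w : S → ℝ) (D1 : Finset D)
    (Ssup : Finset S) (x : D → S → ℝ) : ℝ :=
  ∑ j ∈ Ssup, (1 / w j) * g (w j * (1 - ∑ i ∈ D1, x i j))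


set_option linter.unusedSectionVars false
set_option maxHeartbeats 1000000

section Aux

variable {D S : Type*} [DecidableEq D] [DecidableEq S]

lemma maxWM_set_finite (w : S → ℝ) (Ed : Finset (D × S)) (A : Finset D) (T : Finset S) :
    ((fun M => ∑ e ∈ M, w e.2) '' {M | IsMatchingBtw Ed A T M}).Finite := by
  apply Set.Finite.image
  apply Set.Finite.subset (Ed.powerset : Finset (Finset (D × S))).finite_toSet
  intro M hM
  simpa [Finset.mem_powerset] using hM.1.1

lemma empty_isMatchingBtw (Ed : Finset (D × S)) (A : Finset D) (T : Finset S) :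
    IsMatchingBtw Ed A T (∅ : Finset (D × S)) := by
  refine ⟨⟨Finset.empty_subset _, ?_⟩, ?_⟩ <;> simp

lemma le_maxWM (w : S → ℝ) {Ed : Finset (D × S)} {A : Finset D} {T : Finset S}
    {M : Finset (D × S)} (hM : IsMatchingBtw Ed A T M) :
    ∑ e ∈ M, w e.2 ≤ maxWM w Ed A T :=
  le_csSup (maxWM_set_finite w Ed A T).bddAbove ⟨M, hM, rfl⟩

lemma maxWM_nonneg (w : S → ℝ) (Ed : Finset (D × S)) (A : Finset D) (T : Finset S) :
    0 ≤ maxWM w Ed A T := by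
  have := le_maxWM w (empty_isMatchingBtw Ed A T)
  simpa using this

lemma maxWM_le (w : S → ℝ) {Ed : Finset (D × S)} {A : Finset D} {T : Finset S} {c : ℝ}
    (hc : 0 ≤ c) (h : ∀ M, IsMatchingBtw Ed A T M → ∑ e ∈ M, w e.2 ≤ c) :
    maxWM w Ed A T ≤ c := by
  apply Real.sSup_le _ hc
  rintro v ⟨M, hM, rfl⟩
  exact h M hM

lemma sum_suppliesOf {M : Finset (D × S)}
    (hM : ∀ e ∈ M, ∀ e' ∈ M, e ≠ e' → e.1 ≠ e'.1 ∧ e.2 ≠ e'.2) (f : S → ℝ) :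
    ∑ j ∈ suppliesOf M, f j = ∑ e ∈ M, f e.2 := by
  unfold suppliesOf
  apply Finset.sum_image
  intro e he e' he' hsnd
  by_contra hne
  exact (hM e he e' he' hne).2 hsnd

end Aux

lemma slope_lt_slope_of_lt {g : ℝ → ℝ} (hg : StrictConvexOn ℝ Set.univ g)
    {a b c d : ℝ} (hab : a < b) (hbc : b < c) (hcd : c < d) :
    (g b - g a) / (b - a) < (g d - g c) / (d - c) := by
  have h1 := hg.slope_strict_mono_adjacent (Set.mem_univ a) (Set.mem_univ c) hab hbc
  have h2 := hg.slope_strict_mono_adjacent (Set.mem_univ b) (Set.mem_univ d) hbc hcd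
  linarith

section Struct
variable {D S : Type*} [DecidableEq D] [DecidableEq S]

lemma sum_ite_and_right {α : Type*} [DecidableEq α] (s : Finset α) (j : α) (δ : ℝ)
    (P : Prop) [Decidable P] :
    ∑ b ∈ s, (if P ∧ b = j then δ else 0) = if P ∧ j ∈ s then δ else 0 := by
  by_cases hP : P <;> simp [hP, Finset.sum_ite_eq']

lemma sum_ite_and_left {α : Type*} [DecidableEq α] (s : Finset α) (i : α) (δ : ℝ)
    (P : Prop) [Decidable P] :
    ∑ a ∈ s, (if a = i ∧ P then δ else 0) = if i ∈ s ∧ P then δ else 0 := by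
  by_cases hP : P <;> simp [hP, Finset.sum_ite_eq']


variable {Ed : Finset (D × S)} {D1 : Finset D} {Ssup : Finset S} {w : S → ℝ}
  {g : ℝ → ℝ} {xs : D → S → ℝ}

/-- Saturation lemma: if some neighbor of `i` is not fully used, then `i`'s row is tight. -/
lemma opt_saturated (hw : ∀ j ∈ Ssup, 0 < w j) (hg_mono : StrictMono g)
    (hxs : IsFracMatching Ed D1 Ssup xs)
    (hopt : ∀ x, IsFracMatching Ed D1 Ssup x → PgObj g w D1 Ssup xs ≤ PgObj g w D1 Ssup x)
    {i : D} {j : S} (hi : i ∈ D1) (hij : (i, j) ∈ Ed) (hj : j ∈ Ssup)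
    (hyj : ∑ a ∈ D1, xs a j < 1) : ∑ b ∈ Ssup, xs i b = 1 := by
  obtain ⟨hnn, hedge, hrow, hcol⟩ := hxs
  by_contra hne
  have hrowlt : ∑ b ∈ Ssup, xs i b < 1 := lt_of_le_of_ne (hrow i hi) hne
  set δ : ℝ := min (1 - ∑ b ∈ Ssup, xs i b) (1 - ∑ a ∈ D1, xs a j) with hδ
  have hδpos : 0 < δ := lt_min (by linarith) (by linarith)
  have hδr : δ ≤ 1 - ∑ b ∈ Ssup, xs i b := min_le_left _ _
  have hδc : δ ≤ 1 - ∑ a ∈ D1, xs a j := min_le_right _ _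
  set x' : D → S → ℝ := fun a b => xs a b + (if a = i ∧ b = j then δ else 0) with hx'
  have hx'col : ∀ b ∈ Ssup, ∑ a ∈ D1, x' a b
      = (∑ a ∈ D1, xs a b) + (if b = j then δ else 0) := by
    intro b _
    rw [hx', Finset.sum_add_distrib, sum_ite_and_left D1 i δ (b = j)]
    simp [hi]
  have hfeas : IsFracMatching Ed D1 Ssup x' := by
    refine ⟨?_, ?_, ?_, ?_⟩
    · intro a b
      have := hnn a b
      simp only [hx']
      split <;> linarith
    · intro a b hab
      have h0 := hedge a b hab
      have h1 : ¬(a = i ∧ b = j) := by rintro ⟨rfl, rfl⟩; exact hab hij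
      simp only [hx']
      rw [if_neg h1, h0, add_zero]
    · intro a ha
      simp only [hx']
      rw [Finset.sum_add_distrib, sum_ite_and_right Ssup j δ (a = i)]
      by_cases hai : a = i
      · subst hai
        rw [if_pos ⟨rfl, hj⟩]
        linarith
      · rw [if_neg (by tauto)]
        have := hrow a ha
        linarith
    · intro b hb
      rw [hx'col b hb]
      by_cases hbj : b = j
      · subst hbj
        rw [if_pos rfl]
        linarith
      · rw [if_neg hbj]
        have := hcol b hb
        linarith
  have hlt : PgObj g w D1 Ssup x' < PgObj g w D1 Ssup xs := by
    unfold PgObj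
    apply Finset.sum_lt_sum
    · intro b hb
      rw [hx'col b hb]
      by_cases hbj : b = j
      · subst hbj
        rw [if_pos rfl]
        have hwb := hw b hb
        have hgle : g (w b * (1 - ((∑ a ∈ D1, xs a b) + δ))) ≤ g (w b * (1 - ∑ a ∈ D1, xs a b)) := by
          apply hg_mono.le_iff_le.2
          nlinarith
        have h1w : (0:ℝ) ≤ 1 / w b := by positivity
        exact mul_le_mul_of_nonneg_left hgle h1w
      · rw [if_neg hbj, add_zero]
    · refine ⟨j, hj, ?_⟩
      rw [hx'col j hj, if_pos rfl]
      have hwj := hw j hj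
      have hglt : g (w j * (1 - ((∑ a ∈ D1, xs a j) + δ))) < g (w j * (1 - ∑ a ∈ D1, xs a j)) := by
        apply hg_mono
        nlinarith
      have h1w : (0:ℝ) < 1 / w j := by positivity
      exact mul_lt_mul_of_pos_left hglt h1w
  exact absurd (hopt x' hfeas) (by linarith)

/-- Exchange lemma: leftover at a usable neighbor `j` is at most leftover where mass sits. -/
lemma opt_exchange (hw : ∀ j ∈ Ssup, 0 < w j) (hg_conv : StrictConvexOn ℝ Set.univ g)
    (hxs : IsFracMatching Ed D1 Ssup xs)
    (hopt : ∀ x, IsFracMatching Ed D1 Ssup x → PgObj g w D1 Ssup xs ≤ PgObj g w D1 Ssup x)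
    {i : D} {j j' : S} (hi : i ∈ D1) (hij : (i, j) ∈ Ed) (hj : j ∈ Ssup) (hj' : j' ∈ Ssup)
    (hpos : 0 < xs i j') (hyj : ∑ a ∈ D1, xs a j < 1) :
    w j * (1 - ∑ a ∈ D1, xs a j) ≤ w j' * (1 - ∑ a ∈ D1, xs a j') := by
  obtain ⟨hnn, hedge, hrow, hcol⟩ := hxs
  by_contra hcon
  push_neg at hcon
  set yj := ∑ a ∈ D1, xs a j with hyjdef
  set yj' := ∑ a ∈ D1, xs a j' with hyj'def
  set L := w j * (1 - yj) with hL
  set L' := w j' * (1 - yj') with hL'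
  have hwj := hw j hj
  have hwj' := hw j' hj'
  have hyj'le : yj' ≤ 1 := hcol j' hj'
  have hjj' : j ≠ j' := by
    rintro rfl; exact absurd rfl (ne_of_gt hcon)
  set δ : ℝ := min (xs i j') (min (1 - yj) ((L - L') / (2 * (w j + w j')))) with hδ
  have hδpos : 0 < δ := by
    apply lt_min hpos
    apply lt_min (by linarith)
    apply div_pos (by linarith) (by linarith)
  have hδ1 : δ ≤ xs i j' := min_le_left _ _
  have hδ2 : δ ≤ 1 - yj := le_trans (min_le_right _ _) (min_le_left _ _)
  have hδ3 : δ * (2 * (w j + w j')) ≤ L - L' := by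
    have h' : δ ≤ (L - L') / (2 * (w j + w j')) :=
      le_trans (min_le_right (xs i j') _) (min_le_right (1 - yj) _)
    rw [le_div_iff₀ (by linarith)] at h'
    exact h'
  have hij' : (i, j') ∈ Ed := by
    by_contra hc; exact absurd (hedge i j' hc) (ne_of_gt hpos)
  set x' : D → S → ℝ := fun a b =>
    xs a b + (if a = i ∧ b = j then δ else 0) - (if a = i ∧ b = j' then δ else 0) with hx'
  have hx'col : ∀ b ∈ Ssup, ∑ a ∈ D1, x' a b
      = (∑ a ∈ D1, xs a b) + (if b = j then δ else 0) - (if b = j' then δ else 0) := by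
    intro b _
    rw [hx', Finset.sum_sub_distrib, Finset.sum_add_distrib,
      sum_ite_and_left D1 i δ (b = j), sum_ite_and_left D1 i δ (b = j')]
    simp [hi]
  have hfeas : IsFracMatching Ed D1 Ssup x' := by
    refine ⟨?_, ?_, ?_, ?_⟩
    · intro a b
      have h1 := hnn a b
      simp only [hx']
      by_cases h2 : a = i ∧ b = j'
      · obtain ⟨rfl, rfl⟩ := h2
        rw [if_neg (fun h => (Ne.symm hjj') h.2), if_pos ⟨rfl, rfl⟩]
        linarith
      · rw [if_neg h2]
        split <;> linarith
    · intro a b hab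
      have h0 := hedge a b hab
      have h1 : ¬(a = i ∧ b = j) := by rintro ⟨rfl, rfl⟩; exact hab hij
      have h2 : ¬(a = i ∧ b = j') := by rintro ⟨rfl, rfl⟩; exact hab hij'
      simp only [hx']
      rw [if_neg h1, if_neg h2, h0]
      ring
    · intro a ha
      simp only [hx']
      rw [Finset.sum_sub_distrib, Finset.sum_add_distrib,
        sum_ite_and_right Ssup j δ (a = i), sum_ite_and_right Ssup j' δ (a = i)]
      by_cases hai : a = i
      · subst hai
        rw [if_pos ⟨rfl, hj⟩, if_pos ⟨rfl, hj'⟩]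
        have := hrow a ha
        linarith
      · rw [if_neg (by tauto), if_neg (by tauto)]
        have := hrow a ha
        linarith
    · intro b hb
      rw [hx'col b hb]
      by_cases hbj : b = j
      · subst hbj
        rw [if_pos rfl, if_neg (by tauto)]
        linarith
      · rw [if_neg hbj]
        have h1 := hcol b hb
        split <;> linarith
  -- objective strictly decreases
  have hab : L' < L' + w j' * δ := by nlinarith
  have hbc : L' + w j' * δ < L - w j * δ := by nlinarith
  have hcd : L - w j * δ < L := by nlinarith
  have hslope := slope_lt_slope_of_lt hg_conv hab hbc hcd
  have hba : L' + w j' * δ - L' = w j' * δ := by ring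
  have hdc : L - (L - w j * δ) = w j * δ := by ring
  rw [hba, hdc] at hslope
  have hkey : (1 / w j') * (g (L' + w j' * δ) - g L') < (1 / w j) * (g L - g (L - w j * δ)) := by
    have e1 : (1 / w j') * (g (L' + w j' * δ) - g L')
        = ((g (L' + w j' * δ) - g L') / (w j' * δ)) * δ := by field_simp
    have e2 : (1 / w j) * (g L - g (L - w j * δ))
        = ((g L - g (L - w j * δ)) / (w j * δ)) * δ := by field_simp
    rw [e1, e2]
    exact mul_lt_mul_of_pos_right hslope hδpos
  have hsum : PgObj g w D1 Ssup x' - PgObj g w D1 Ssup xs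
      = ((1 / w j) * (g (L - w j * δ) - g L)) + ((1 / w j') * (g (L' + w j' * δ) - g L')) := by
    unfold PgObj
    rw [← Finset.sum_sub_distrib]
    have hsub : ({j, j'} : Finset S) ⊆ Ssup := by
      intro t ht
      rcases Finset.mem_insert.1 ht with rfl | ht
      · exact hj
      · rw [Finset.mem_singleton.1 ht]; exact hj'
    rw [← Finset.sum_subset hsub]
    · rw [Finset.sum_pair hjj']
      rw [hx'col j hj, hx'col j' hj']
      rw [if_pos rfl, if_neg hjj', if_neg (Ne.symm hjj'), if_pos rfl]
      have e1 : w j * (1 - (yj + δ - 0)) = L - w j * δ := by rw [hL]; ring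
      have e2 : w j' * (1 - (yj' + 0 - δ)) = L' + w j' * δ := by rw [hL']; ring
      rw [← hyjdef, ← hyj'def, e1, e2]
      ring
    · intro t ht htne
      rw [hx'col t ht]
      have h1 : t ≠ j := by intro h; exact htne (by simp [h])
      have h2 : t ≠ j' := by intro h; exact htne (by simp [h])
      rw [if_neg h1, if_neg h2, add_zero, sub_zero, sub_self]
  have hge := hopt x' hfeas
  rw [show PgObj g w D1 Ssup x' = PgObj g w D1 Ssup xs
      + (PgObj g w D1 Ssup x' - PgObj g w D1 Ssup xs) by ring, hsum] at hge
  linarith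

end Struct

section Key
variable {D S : Type*} [DecidableEq D] [DecidableEq S]
variable {Ed : Finset (D × S)} {D1 : Finset D} {Ssup : Finset S} {w : S → ℝ}
  {g : ℝ → ℝ} {xs : D → S → ℝ}

lemma edge_ineq (hw : ∀ j ∈ Ssup, 0 < w j) (hg_mono : StrictMono g)
    (hg_conv : StrictConvexOn ℝ Set.univ g)
    (hxs : IsFracMatching Ed D1 Ssup xs)
    (hopt : ∀ x, IsFracMatching Ed D1 Ssup x → PgObj g w D1 Ssup xs ≤ PgObj g w D1 Ssup x)
    {i : D} {j : S} (hi : i ∈ D1) (hij : (i, j) ∈ Ed) (hj : j ∈ Ssup)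
    {T : ℝ} (hT0 : 0 ≤ T) (hT : T ≤ ∑ a ∈ D1, xs a j) :
    (3 / 4) * w j ≤ w j * (∑ a ∈ D1, xs a j)
      + (∑ j' ∈ Ssup, xs i j' * (w j' * (1 - ∑ a ∈ D1, xs a j')))
      - (w j * (1 - ∑ a ∈ D1, xs a j)) * T := by
  obtain ⟨hnn, hedge, hrow, hcol⟩ := hxs
  have hwj := hw j hj
  have hyle : ∑ a ∈ D1, xs a j ≤ 1 := hcol j hj
  have hSnn : 0 ≤ ∑ j' ∈ Ssup, xs i j' * (w j' * (1 - ∑ a ∈ D1, xs a j')) := by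
    apply Finset.sum_nonneg
    intro j' hj'
    have h1 := hcol j' hj'
    have h2 := hw j' hj'
    have h3 := hnn i j'
    exact mul_nonneg h3 (mul_nonneg (le_of_lt h2) (by linarith))
  by_cases hy1 : 1 ≤ ∑ a ∈ D1, xs a j
  · have hyeq : ∑ a ∈ D1, xs a j = 1 := le_antisymm hyle hy1
    rw [hyeq]
    simp only [sub_self, mul_zero, zero_mul]
    linarith
  · push_neg at hy1
    have hsat : ∑ b ∈ Ssup, xs i b = 1 :=
      opt_saturated hw hg_mono ⟨hnn, hedge, hrow, hcol⟩ hopt hi hij hj hy1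
    have hexch : ∀ j' ∈ Ssup,
        xs i j' * (w j * (1 - ∑ a ∈ D1, xs a j))
          ≤ xs i j' * (w j' * (1 - ∑ a ∈ D1, xs a j')) := by
      intro j' hj'
      rcases eq_or_lt_of_le (hnn i j') with h0 | h0
      · rw [← h0]; ring_nf; exact le_refl _
      · exact mul_le_mul_of_nonneg_left
          (opt_exchange hw hg_conv ⟨hnn, hedge, hrow, hcol⟩ hopt hi hij hj hj' h0 hy1)
          (le_of_lt h0)
    have hsumge : (w j * (1 - ∑ a ∈ D1, xs a j))
        ≤ ∑ j' ∈ Ssup, xs i j' * (w j' * (1 - ∑ a ∈ D1, xs a j')) := by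
      calc w j * (1 - ∑ a ∈ D1, xs a j)
          = ∑ j' ∈ Ssup, xs i j' * (w j * (1 - ∑ a ∈ D1, xs a j)) := by
            rw [← Finset.sum_mul, hsat, one_mul]
        _ ≤ _ := Finset.sum_le_sum hexch
    set y := ∑ a ∈ D1, xs a j with hy
    set L := w j * (1 - y) with hL
    have hLnn : 0 ≤ L := by nlinarith
    have h1 : L * (1 - T) ≥ L * (1 - y) := by
      apply mul_le_mul_of_nonneg_left _ hLnn
      linarith
    have h2 : (3 / 4) * w j ≤ w j * y + L * (1 - y) := by nlinarith [sq_nonneg (y - 1/2)]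
    have h3 : w j * y + L * (1 - y) ≤ w j * y + L * (1 - T) := by linarith
    calc (3/4) * w j ≤ w j * y + L * (1 - T) := le_trans h2 h3
      _ = w j * y + L - L * T := by ring
      _ ≤ w j * y + (∑ j' ∈ Ssup, xs i j' * (w j' * (1 - ∑ a ∈ D1, xs a j'))) - L * T := by
          linarith

lemma key_ineq (hw : ∀ j ∈ Ssup, 0 < w j) (hg_mono : StrictMono g)
    (hg_conv : StrictConvexOn ℝ Set.univ g)
    (hxs : IsFracMatching Ed D1 Ssup xs)
    (hopt : ∀ x, IsFracMatching Ed D1 Ssup x → PgObj g w D1 Ssup xs ≤ PgObj g w D1 Ssup x)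
    {N : Finset (D × S)} (hNEd : N ⊆ Ed)
    (hNmatch : ∀ e ∈ N, ∀ e' ∈ N, e ≠ e' → e.1 ≠ e'.1 ∧ e.2 ≠ e'.2)
    (hND1 : ∀ e ∈ N, e.1 ∈ D1) (hNS : ∀ e ∈ N, e.2 ∈ Ssup)
    {B : Finset S} (hB : B ⊆ Ssup) (hAB : ∀ e ∈ N, e.2 ∉ B) :
    (3 / 4) * ∑ e ∈ N, w e.2
      ≤ ∑ j ∈ Ssup \ B, w j * (∑ a ∈ D1, xs a j) + (1 / 4) * ∑ j ∈ B, w j := by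
  classical
  obtain ⟨hnn, hedge, hrow, hcol⟩ := hxs
  -- abbreviations
  have hynn : ∀ j, 0 ≤ ∑ a ∈ D1, xs a j := fun j => Finset.sum_nonneg fun a _ => hnn a j
  have hyle : ∀ j ∈ Ssup, ∑ a ∈ D1, xs a j ≤ 1 := hcol
  -- T j := N-mass into j
  have hTnn : ∀ j, 0 ≤ ∑ e ∈ N, xs e.1 j :=
    fun j => Finset.sum_nonneg fun e _ => hnn e.1 j
  have hTy : ∀ j, (∑ e ∈ N, xs e.1 j) ≤ ∑ a ∈ D1, xs a j := by
    intro j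
    have hinj : ∀ e ∈ N, ∀ e' ∈ N, e.1 = e'.1 → e = e' := by
      intro e he e' he' h
      by_contra hne
      exact (hNmatch e he e' he' hne).1 h
    have himg : ∑ i ∈ N.image Prod.fst, xs i j = ∑ e ∈ N, xs e.1 j :=
      Finset.sum_image hinj
    rw [← himg]
    apply Finset.sum_le_sum_of_subset_of_nonneg
    · intro i hi
      obtain ⟨e, he, rfl⟩ := Finset.mem_image.1 hi
      exact hND1 e he
    · intro i _ _
      exact hnn i j
  -- per-edge inequality summed
  have hstep : ∀ e ∈ N, (3 / 4) * w e.2 ≤ w e.2 * (∑ a ∈ D1, xs a e.2)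
      + (∑ j' ∈ Ssup, xs e.1 j' * (w j' * (1 - ∑ a ∈ D1, xs a j')))
      - (w e.2 * (1 - ∑ a ∈ D1, xs a e.2)) * (∑ e' ∈ N, xs e'.1 e.2) := by
    intro e he
    exact edge_ineq hw hg_mono hg_conv ⟨hnn, hedge, hrow, hcol⟩ hopt
      (hND1 e he) (show (e.1, e.2) ∈ Ed by rw [Prod.mk.eta]; exact hNEd he)
      (hNS e he) (hTnn e.2) (hTy e.2)
  have hsummed := Finset.sum_le_sum hstep
  rw [← Finset.mul_sum] at hsummed
  -- identify the three sums
  have hinj2 : ∀ e ∈ N, ∀ e' ∈ N, e.2 = e'.2 → e = e' := by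
    intro e he e' he' h
    by_contra hne
    exact (hNmatch e he e' he' hne).2 h
  have hsum2 : ∀ f : S → ℝ, ∑ j ∈ N.image Prod.snd, f j = ∑ e ∈ N, f e.2 :=
    fun f => Finset.sum_image hinj2
  have hswap : ∑ e ∈ N, (∑ j' ∈ Ssup, xs e.1 j' * (w j' * (1 - ∑ a ∈ D1, xs a j')))
      = ∑ j' ∈ Ssup, (∑ e ∈ N, xs e.1 j') * (w j' * (1 - ∑ a ∈ D1, xs a j')) := by
    rw [Finset.sum_comm]
    exact Finset.sum_congr rfl fun j' _ => (Finset.sum_mul _ _ _).symm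
  rw [Finset.sum_sub_distrib, Finset.sum_add_distrib, hswap] at hsummed
  set A : Finset S := N.image Prod.snd with hA
  have hAS : A ⊆ Ssup := by
    intro j hjA
    obtain ⟨e, he, rfl⟩ := Finset.mem_image.1 hjA
    exact hNS e he
  have hAB' : A ⊆ Ssup \ B := by
    intro j hjA
    obtain ⟨e, he, rfl⟩ := Finset.mem_image.1 hjA
    exact Finset.mem_sdiff.2 ⟨hNS e he, hAB e he⟩
  have hS1 : ∑ e ∈ N, w e.2 * (∑ a ∈ D1, xs a e.2)
      = ∑ j ∈ A, w j * (∑ a ∈ D1, xs a j) := (hsum2 (fun j => w j * (∑ a ∈ D1, xs a j))).symm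
  have hS3 : ∑ e ∈ N, (w e.2 * (1 - ∑ a ∈ D1, xs a e.2)) * (∑ e' ∈ N, xs e'.1 e.2)
      = ∑ j ∈ A, (∑ e' ∈ N, xs e'.1 j) * (w j * (1 - ∑ a ∈ D1, xs a j)) := by
    rw [← hsum2 (fun j => (w j * (1 - ∑ a ∈ D1, xs a j)) * (∑ e' ∈ N, xs e'.1 j))]
    exact Finset.sum_congr rfl fun j _ => by ring
  have hsplit1 : ∑ j ∈ Ssup \ A, (∑ e ∈ N, xs e.1 j) * (w j * (1 - ∑ a ∈ D1, xs a j))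
        + ∑ j ∈ A, (∑ e ∈ N, xs e.1 j) * (w j * (1 - ∑ a ∈ D1, xs a j))
      = ∑ j' ∈ Ssup, (∑ e ∈ N, xs e.1 j') * (w j' * (1 - ∑ a ∈ D1, xs a j')) :=
    Finset.sum_sdiff hAS
  have hBsub : B ⊆ Ssup \ A := by
    intro j hjB
    refine Finset.mem_sdiff.2 ⟨hB hjB, ?_⟩
    intro hjA
    obtain ⟨e, he, rfl⟩ := Finset.mem_image.1 hjA
    exact hAB e he hjB
  have hsplit2 : ∑ j ∈ (Ssup \ A) \ B, (∑ e ∈ N, xs e.1 j) * (w j * (1 - ∑ a ∈ D1, xs a j))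
        + ∑ j ∈ B, (∑ e ∈ N, xs e.1 j) * (w j * (1 - ∑ a ∈ D1, xs a j))
      = ∑ j ∈ Ssup \ A, (∑ e ∈ N, xs e.1 j) * (w j * (1 - ∑ a ∈ D1, xs a j)) :=
    Finset.sum_sdiff hBsub
  have hBbound : ∑ j ∈ B, (∑ e ∈ N, xs e.1 j) * (w j * (1 - ∑ a ∈ D1, xs a j))
      ≤ (1 / 4) * ∑ j ∈ B, w j := by
    rw [Finset.mul_sum]
    apply Finset.sum_le_sum
    intro j hjB
    have hjS : j ∈ Ssup := hB hjB
    have h1 := hTy j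
    have h2 := hTnn j
    have h3 := hyle j hjS
    have h4 := hynn j
    have h5 := hw j hjS
    have hq : (∑ e ∈ N, xs e.1 j) * (1 - ∑ a ∈ D1, xs a j) ≤ 1/4 := by
      nlinarith [mul_nonneg (sub_nonneg.2 h1) (sub_nonneg.2 h3),
        sq_nonneg ((∑ a ∈ D1, xs a j) - 1/2)]
    calc (∑ e ∈ N, xs e.1 j) * (w j * (1 - ∑ a ∈ D1, xs a j))
        = w j * ((∑ e ∈ N, xs e.1 j) * (1 - ∑ a ∈ D1, xs a j)) := by ring
      _ ≤ w j * (1/4) := mul_le_mul_of_nonneg_left hq h5.le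
      _ = 1 / 4 * w j := by ring
  have hObound : ∑ j ∈ (Ssup \ A) \ B, (∑ e ∈ N, xs e.1 j) * (w j * (1 - ∑ a ∈ D1, xs a j))
      ≤ ∑ j ∈ (Ssup \ A) \ B, w j * (∑ a ∈ D1, xs a j) := by
    apply Finset.sum_le_sum
    intro j hj
    have hjS : j ∈ Ssup := (Finset.mem_sdiff.1 (Finset.mem_sdiff.1 hj).1).1
    have h1 := hTy j
    have h2 := hTnn j
    have h3 := hyle j hjS
    have h4 := hynn j
    have h5 := hw j hjS
    have hq : (∑ e ∈ N, xs e.1 j) * (1 - ∑ a ∈ D1, xs a j) ≤ ∑ a ∈ D1, xs a j := by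
      nlinarith [mul_nonneg h2 h4]
    calc (∑ e ∈ N, xs e.1 j) * (w j * (1 - ∑ a ∈ D1, xs a j))
        = w j * ((∑ e ∈ N, xs e.1 j) * (1 - ∑ a ∈ D1, xs a j)) := by ring
      _ ≤ w j * (∑ a ∈ D1, xs a j) := mul_le_mul_of_nonneg_left hq h5.le
  have hcomm : (Ssup \ A) \ B = (Ssup \ B) \ A := sdiff_sdiff_comm
  have hsplit3 : ∑ j ∈ (Ssup \ B) \ A, w j * (∑ a ∈ D1, xs a j)
        + ∑ j ∈ A, w j * (∑ a ∈ D1, xs a j)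
      = ∑ j ∈ Ssup \ B, w j * (∑ a ∈ D1, xs a j) :=
    Finset.sum_sdiff hAB'
  rw [hS1, hS3] at hsummed
  rw [hcomm] at hsplit2 hObound
  linarith

end Key


section Exp
variable {D S : Type*} [DecidableEq D] [DecidableEq S]
variable {Ed : Finset (D × S)} {D1 : Finset D} {Ssup : Finset S} {w : S → ℝ}
  {xs : D → S → ℝ} {μ : Finset (D × S) → ℝ}

lemma sum_suppliesOf' {M : Finset (D × S)}
    (hM : ∀ e ∈ M, ∀ e' ∈ M, e ≠ e' → e.1 ≠ e'.1 ∧ e.2 ≠ e'.2) (f : S → ℝ) :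
    ∑ j ∈ suppliesOf M, f j = ∑ e ∈ M, f e.2 := by
  unfold suppliesOf
  apply Finset.sum_image
  intro e he e' he' hsnd
  by_contra hne
  exact (hM e he e' he' hne).2 hsnd

lemma exp_first
    (hμ_supp : ∀ M, μ M ≠ 0 → IsMatchingBtw Ed D1 Ssup M)
    (hμ_marg : ∀ i ∈ D1, ∀ j ∈ Ssup,
      ∑ M ∈ Ed.powerset.filter (fun M => (i, j) ∈ M), μ M = xs i j) :
    ∑ M ∈ Ed.powerset, μ M * (∑ j ∈ suppliesOf M, w j)
      = ∑ j ∈ Ssup, w j * (∑ i ∈ D1, xs i j) := by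
  classical
  have hstep : ∑ j ∈ Ssup, w j * (∑ i ∈ D1, xs i j)
      = ∑ j ∈ Ssup, ∑ i ∈ D1, ∑ M ∈ Ed.powerset,
          (if (i, j) ∈ M then w j * μ M else 0) := by
    apply Finset.sum_congr rfl
    intro j hj
    rw [Finset.mul_sum]
    apply Finset.sum_congr rfl
    intro i hi
    rw [← hμ_marg i hi j hj, Finset.mul_sum, Finset.sum_filter]
  have hsw : ∑ j ∈ Ssup, ∑ i ∈ D1, ∑ M ∈ Ed.powerset, (if (i, j) ∈ M then w j * μ M else 0)
      = ∑ M ∈ Ed.powerset, ∑ i ∈ D1, ∑ j ∈ Ssup, (if (i, j) ∈ M then w j * μ M else 0) := by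
    calc ∑ j ∈ Ssup, ∑ i ∈ D1, ∑ M ∈ Ed.powerset, (if (i, j) ∈ M then w j * μ M else 0)
        = ∑ i ∈ D1, ∑ j ∈ Ssup, ∑ M ∈ Ed.powerset, (if (i, j) ∈ M then w j * μ M else 0) :=
          Finset.sum_comm
      _ = ∑ i ∈ D1, ∑ M ∈ Ed.powerset, ∑ j ∈ Ssup, (if (i, j) ∈ M then w j * μ M else 0) :=
          Finset.sum_congr rfl fun i _ => Finset.sum_comm
      _ = ∑ M ∈ Ed.powerset, ∑ i ∈ D1, ∑ j ∈ Ssup, (if (i, j) ∈ M then w j * μ M else 0) :=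
          Finset.sum_comm
  have hperM : ∀ M ∈ Ed.powerset, ∑ i ∈ D1, ∑ j ∈ Ssup, (if (i, j) ∈ M then w j * μ M else 0)
      = μ M * (∑ j ∈ suppliesOf M, w j) := by
    intro M hM
    by_cases hμ0 : μ M = 0
    · simp [hμ0]
    · obtain ⟨⟨hMEd, hMmatch⟩, hMbtw⟩ := hμ_supp M hμ0
      have hprod : ∑ i ∈ D1, ∑ j ∈ Ssup, (if (i, j) ∈ M then w j * μ M else 0)
          = ∑ p ∈ D1 ×ˢ Ssup, (if p ∈ M then w p.2 * μ M else 0) :=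
        (Finset.sum_product (s := D1) (t := Ssup)
          (f := fun p => if p ∈ M then w p.2 * μ M else 0)).symm
      rw [hprod, ← Finset.sum_filter]
      have hfeq : (D1 ×ˢ Ssup).filter (fun p => p ∈ M) = M := by
        ext e
        simp only [Finset.mem_filter, Finset.mem_product]
        exact ⟨fun h => h.2, fun h => ⟨⟨(hMbtw e h).1, (hMbtw e h).2⟩, h⟩⟩
      rw [hfeq, sum_suppliesOf' hMmatch, Finset.mul_sum]
      exact Finset.sum_congr rfl fun e _ => mul_comm _ _
  rw [hstep, hsw]
  exact (Finset.sum_congr rfl hperM).symm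

lemma exp_cover
    (hxnn : ∀ i j, 0 ≤ xs i j)
    (hμ_nonneg : ∀ M, 0 ≤ μ M)
    (hμ_supp : ∀ M, μ M ≠ 0 → IsMatchingBtw Ed D1 Ssup M)
    (hμ_marg : ∀ i ∈ D1, ∀ j ∈ Ssup,
      ∑ M ∈ Ed.powerset.filter (fun M => (i, j) ∈ M), μ M = xs i j)
    {j : S} (hj : j ∈ Ssup) :
    ∑ M ∈ Ed.powerset, μ M * (if j ∈ suppliesOf M then 1 else 0) ≤ ∑ i ∈ D1, xs i j := by
  classical
  have hy : ∑ i ∈ D1, xs i j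
      = ∑ M ∈ Ed.powerset, ∑ i ∈ D1, (if (i, j) ∈ M then μ M else 0) := by
    rw [Finset.sum_comm]
    apply Finset.sum_congr rfl
    intro i hi
    rw [← hμ_marg i hi j hj, Finset.sum_filter]
  rw [hy]
  apply Finset.sum_le_sum
  intro M hM
  by_cases hμ0 : μ M = 0
  · simp [hμ0]
  · obtain ⟨⟨hMEd, hMmatch⟩, hMbtw⟩ := hμ_supp M hμ0
    by_cases hjM : j ∈ suppliesOf M
    · obtain ⟨e, he, hej⟩ := Finset.mem_image.1 hjM
      rw [if_pos hjM, mul_one]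
      have he1 : e.1 ∈ D1 := (hMbtw e he).1
      have heM : (e.1, j) ∈ M := by rw [← hej, Prod.mk.eta]; exact he
      calc μ M = (if (e.1, j) ∈ M then μ M else 0) := by rw [if_pos heM]
        _ ≤ ∑ i ∈ D1, (if (i, j) ∈ M then μ M else 0) := by
            apply Finset.single_le_sum (f := fun i => if (i, j) ∈ M then μ M else 0) (fun i _ => ?_) he1
            split
            · exact hμ_nonneg M
            · exact le_refl _
    · rw [if_neg hjM, mul_zero]
      apply Finset.sum_nonneg
      intro i _
      split
      · exact hμ_nonneg M
      · exact le_refl _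

end Exp

/-- **Theorem (3/4-competitiveness of Algorithm 1 against optimum offline).**
If `x*` is an optimal solution of the convex program `P^g` for a differentiable,
strictly increasing, strictly convex `g`, and `μ` is a finitely supported distribution over
matchings of `G[D1,S]` whose edge marginals are `x*`, then for every realized set `R ⊆ D2`
of second-stage demand,
`E_{M1∼μ}[ Σ_{j ∈ V_S(M1)} w_j + maxWM(R, S∖V_S(M1)) ] ≥ (3/4)·maxWM(D1∪R, S)`. -/
theorem two_stage_matching_three_quarter_competitive
    {D S : Type*} [DecidableEq D] [DecidableEq S]
    (D1 D2 : Finset D) (Ssup : Finset S) (Ed : Finset (D × S)) (w : S → ℝ)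
    (hdisj : Disjoint D1 D2)
    (hE : ∀ e ∈ Ed, e.1 ∈ D1 ∪ D2 ∧ e.2 ∈ Ssup)
    (hw : ∀ j ∈ Ssup, 0 < w j)
    (g : ℝ → ℝ)
    (hg_diff : Differentiable ℝ g)
    (hg_mono : StrictMono g)
    (hg_conv : StrictConvexOn ℝ Set.univ g)
    (xs : D → S → ℝ)
    (hxs : IsFracMatching Ed D1 Ssup xs)
    (hxs_opt : ∀ x, IsFracMatching Ed D1 Ssup x →
      PgObj g w D1 Ssup xs ≤ PgObj g w D1 Ssup x)
    (μ : Finset (D × S) → ℝ)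
    (hμ_nonneg : ∀ M, 0 ≤ μ M)
    (hμ_supp : ∀ M, μ M ≠ 0 → IsMatchingBtw Ed D1 Ssup M)
    (hμ_total : ∑ M ∈ Ed.powerset, μ M = 1)
    (hμ_marg : ∀ i ∈ D1, ∀ j ∈ Ssup,
      ∑ M ∈ Ed.powerset.filter (fun M => (i, j) ∈ M), μ M = xs i j)
    (R : Finset D) (hR : R ⊆ D2) :
    ∑ M ∈ Ed.powerset, μ M *
        ((∑ j ∈ suppliesOf M, w j) + maxWM w Ed R (Ssup \ suppliesOf M)) ≥
      3 / 4 * maxWM w Ed (D1 ∪ R) Ssup := by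
  classical
  have hnn := hxs.1
  set ALG := ∑ M ∈ Ed.powerset, μ M *
      ((∑ j ∈ suppliesOf M, w j) + maxWM w Ed R (Ssup \ suppliesOf M)) with hALG
  have hsplit : ALG = (∑ M ∈ Ed.powerset, μ M * (∑ j ∈ suppliesOf M, w j))
      + ∑ M ∈ Ed.powerset, μ M * maxWM w Ed R (Ssup \ suppliesOf M) := by
    rw [hALG, ← Finset.sum_add_distrib]
    exact Finset.sum_congr rfl fun M _ => by ring
  have hFIR := exp_first (w := w) hμ_supp hμ_marg
  -- ALG is nonnegative
  have hALG0 : 0 ≤ ALG := by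
    rw [hALG]
    apply Finset.sum_nonneg
    intro M hM
    by_cases hμ0 : μ M = 0
    · rw [hμ0, zero_mul]
    · apply mul_nonneg (hμ_nonneg M)
      apply add_nonneg _ (maxWM_nonneg w Ed R (Ssup \ suppliesOf M))
      apply Finset.sum_nonneg
      intro j hj
      obtain ⟨e, he, rfl⟩ := Finset.mem_image.1 hj
      exact (hw e.2 ((hμ_supp M hμ0).2 e he).2).le
  -- main bound for an arbitrary offline matching
  have hmain : ∀ Mstar, IsMatchingBtw Ed (D1 ∪ R) Ssup Mstar →
      3 / 4 * ∑ e ∈ Mstar, w e.2 ≤ ALG := by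
    intro Mstar hMstar
    obtain ⟨⟨hMEd, hMm⟩, hMbtw⟩ := hMstar
    set N1 := Mstar.filter (fun e => e.1 ∈ D1) with hN1
    set N2 := Mstar.filter (fun e => ¬ e.1 ∈ D1) with hN2
    have hN1sub : N1 ⊆ Mstar := Finset.filter_subset _ _
    have hN2sub : N2 ⊆ Mstar := Finset.filter_subset _ _
    have hN1m : ∀ e ∈ N1, ∀ e' ∈ N1, e ≠ e' → e.1 ≠ e'.1 ∧ e.2 ≠ e'.2 :=
      fun e he e' he' hne => hMm e (hN1sub he) e' (hN1sub he') hne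
    have hN2m : ∀ e ∈ N2, ∀ e' ∈ N2, e ≠ e' → e.1 ≠ e'.1 ∧ e.2 ≠ e'.2 :=
      fun e he e' he' hne => hMm e (hN2sub he) e' (hN2sub he') hne
    have hN1D1 : ∀ e ∈ N1, e.1 ∈ D1 := fun e he => (Finset.mem_filter.1 he).2
    have hN1S : ∀ e ∈ N1, e.2 ∈ Ssup := fun e he => (hMbtw e (hN1sub he)).2
    have hN2R : ∀ e ∈ N2, e.1 ∈ R := by
      intro e he
      have h1 := (hMbtw e (hN2sub he)).1
      have h2 := (Finset.mem_filter.1 he).2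
      rcases Finset.mem_union.1 h1 with h | h
      · exact absurd h h2
      · exact h
    have hN2S : ∀ e ∈ N2, e.2 ∈ Ssup := fun e he => (hMbtw e (hN2sub he)).2
    set B := suppliesOf N2 with hB
    have hBS : B ⊆ Ssup := by
      intro j hj
      obtain ⟨e, he, rfl⟩ := Finset.mem_image.1 hj
      exact hN2S e he
    have hN1B : ∀ e ∈ N1, e.2 ∉ B := by
      intro e he hinB
      obtain ⟨e', he', hee'⟩ := Finset.mem_image.1 hinB
      have hne : e' ≠ e := by
        intro h
        rw [h] at he'
        exact (Finset.mem_filter.1 he').2 (Finset.mem_filter.1 he).2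
      exact (hMm e' (hN2sub he') e (hN1sub he) hne).2 hee'
    have hkey := key_ineq hw hg_mono hg_conv hxs hxs_opt
      (fun e he => hMEd (hN1sub he)) hN1m hN1D1 hN1S hBS hN1B
    -- second-stage lower bound
    have hsecM : ∀ M ∈ Ed.powerset,
        μ M * (∑ e ∈ N2, (w e.2 - if e.2 ∈ suppliesOf M then w e.2 else 0))
          ≤ μ M * maxWM w Ed R (Ssup \ suppliesOf M) := by
      intro M hM
      by_cases hμ0 : μ M = 0
      · rw [hμ0, zero_mul, zero_mul]
      · apply mul_le_mul_of_nonneg_left _ (hμ_nonneg M)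
        have hrw : ∑ e ∈ N2, (w e.2 - if e.2 ∈ suppliesOf M then w e.2 else 0)
            = ∑ e ∈ N2.filter (fun e => e.2 ∉ suppliesOf M), w e.2 := by
          conv_rhs => rw [Finset.sum_filter]
          apply Finset.sum_congr rfl
          intro e _
          by_cases h : e.2 ∈ suppliesOf M
          · rw [if_pos h, if_neg (by simpa using h)]
            ring
          · rw [if_neg h, if_pos h]
            ring
        rw [hrw]
        apply le_maxWM w
        refine ⟨⟨?_, ?_⟩, ?_⟩
        · intro e he
          exact hMEd (hN2sub (Finset.filter_subset _ _ he))
        · intro e he e' he' hne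
          exact hN2m e (Finset.filter_subset _ _ he) e' (Finset.filter_subset _ _ he') hne
        · intro e he
          have h1 := Finset.mem_filter.1 he
          exact ⟨hN2R e h1.1, Finset.mem_sdiff.2 ⟨hN2S e h1.1, h1.2⟩⟩
    have hsec1 : ∑ M ∈ Ed.powerset,
        μ M * (∑ e ∈ N2, (w e.2 - if e.2 ∈ suppliesOf M then w e.2 else 0))
        = ∑ e ∈ N2, ∑ M ∈ Ed.powerset,
            μ M * (w e.2 - if e.2 ∈ suppliesOf M then w e.2 else 0) := by
      rw [← Finset.sum_comm]
      exact Finset.sum_congr rfl fun M _ => Finset.mul_sum _ _ _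
    have hsec2 : ∀ e ∈ N2, w e.2 * (1 - ∑ i ∈ D1, xs i e.2)
        ≤ ∑ M ∈ Ed.powerset, μ M * (w e.2 - if e.2 ∈ suppliesOf M then w e.2 else 0) := by
      intro e he
      have hjS := hN2S e he
      have hwpos := hw e.2 hjS
      have hcov := exp_cover hnn hμ_nonneg hμ_supp hμ_marg hjS
      have hrw : ∑ M ∈ Ed.powerset, μ M * (w e.2 - if e.2 ∈ suppliesOf M then w e.2 else 0)
          = w e.2 * (∑ M ∈ Ed.powerset, μ M)
            - w e.2 * ∑ M ∈ Ed.powerset, μ M * (if e.2 ∈ suppliesOf M then 1 else 0) := by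
        rw [Finset.mul_sum, Finset.mul_sum, ← Finset.sum_sub_distrib]
        apply Finset.sum_congr rfl
        intro M _
        by_cases h : e.2 ∈ suppliesOf M
        · rw [if_pos h, if_pos h]; ring
        · rw [if_neg h, if_neg h]; ring
      rw [hrw, hμ_total, mul_one]
      have hm := mul_le_mul_of_nonneg_left hcov hwpos.le
      linarith
    have hsec : ∑ e ∈ N2, w e.2 * (1 - ∑ i ∈ D1, xs i e.2)
        ≤ ∑ M ∈ Ed.powerset, μ M * maxWM w Ed R (Ssup \ suppliesOf M) := by
      calc ∑ e ∈ N2, w e.2 * (1 - ∑ i ∈ D1, xs i e.2)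
          ≤ ∑ e ∈ N2, ∑ M ∈ Ed.powerset,
              μ M * (w e.2 - if e.2 ∈ suppliesOf M then w e.2 else 0) :=
            Finset.sum_le_sum hsec2
        _ = ∑ M ∈ Ed.powerset,
              μ M * (∑ e ∈ N2, (w e.2 - if e.2 ∈ suppliesOf M then w e.2 else 0)) :=
            hsec1.symm
        _ ≤ ∑ M ∈ Ed.powerset, μ M * maxWM w Ed R (Ssup \ suppliesOf M) :=
            Finset.sum_le_sum hsecM
    -- combine everything
    have hsum_split : ∑ e ∈ Mstar, w e.2 = ∑ e ∈ N1, w e.2 + ∑ e ∈ N2, w e.2 :=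
      (Finset.sum_filter_add_sum_filter_not Mstar _ _).symm
    have hBsum : ∑ j ∈ B, w j = ∑ e ∈ N2, w e.2 := sum_suppliesOf' hN2m w
    have hBsum2 : ∑ j ∈ B, w j * (1 - ∑ i ∈ D1, xs i j)
        = ∑ e ∈ N2, w e.2 * (1 - ∑ i ∈ D1, xs i e.2) :=
      sum_suppliesOf' hN2m (fun j => w j * (1 - ∑ i ∈ D1, xs i j))
    have hysplit : ∑ j ∈ Ssup \ B, w j * (∑ i ∈ D1, xs i j)
        + ∑ j ∈ B, w j * (∑ i ∈ D1, xs i j) = ∑ j ∈ Ssup, w j * (∑ i ∈ D1, xs i j) :=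
      Finset.sum_sdiff hBS
    have hBcomb : ∑ j ∈ B, (w j * (∑ i ∈ D1, xs i j)) + ∑ j ∈ B, w j * (1 - ∑ i ∈ D1, xs i j)
        = ∑ j ∈ B, w j := by
      rw [← Finset.sum_add_distrib]
      exact Finset.sum_congr rfl fun j _ => by ring
    rw [hsplit, ← hFIR] at *
    linarith
  have hOPT : maxWM w Ed (D1 ∪ R) Ssup ≤ (4 / 3) * ALG := by
    apply maxWM_le w (by linarith)
    intro M hM
    have := hmain M hM
    linarith
  have : 3 / 4 * maxWM w Ed (D1 ∪ R) Ssup ≤ ALG := by linarith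
  exact this
end

section
/- (Theorem 3, unweighted case, in the conditional form proved via the factor revealing program.) Assume all supply vertices have unit weight, let x* be an optimal solution of P^g, let μ be a distribution over matchings of G[D1,S] with edge marginals x*, let π: D2 → [0,1] be arrival probabilities with R the corresponding independent random subset of D2, and write f(T) := E_R[ν(R,T)] for T ⊆ S. Call T ⊆ S co-maximum-matchable if S∖T can be covered by a matching of G[D1,S] and |S∖T| = ν(D1,S). Suppose T̄ ⊆ S is co-maximum-matchable and satisfies the greedy guarantee: for every co-maximum-matchable T ⊆ S, f(T̄) + |S∖T̄| ≥ (1 − 1/e)·f(T) + |S∖T|. Then, with λ = 1/(e−1), λ·E_{M1∼μ}E_R[ |M1| + ν(R, S∖V_S(M1)) ] + (1−λ)·( |S∖T̄| + f(T̄) ) ≥ (1 − 1/e + 1/e²)·max_{M1 a matching of G[D1,S]} ( |M1| + E_R[ν(R, S∖V_S(M1))] ). In particular, Algorithm 2 with λ = 1/(e−1) is (1 − 1/e + 1/e²) ≈ 0.7674-competitive against the optimum online policy in the unweighted two-stage stochastic matching problem. -/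
open scoped BigOperators

/-- `nuMatch Ed A T`: the maximum cardinality of a matching using only edges
between `A` and `T`. -/
noncomputable def nuMatch {D S : Type*} (Ed : Finset (D × S))
    (A : Finset D) (T : Finset S) : ℕ :=
  sSup {n | ∃ M, IsMatchingBtw Ed A T M ∧ M.card = n}

/-- The objective of the convex program `P^g` in the unweighted setting. -/
noncomputable def PgObjUnw {D S : Type*} (g : ℝ → ℝ) (D1 : Finset D)
    (Ssup : Finset S) (x : D → S → ℝ) : ℝ :=
  ∑ j ∈ Ssup, g (1 - ∑ i ∈ D1, x i j)

/-- Probability that the independently realized second-stage demand set equals `A ⊆ D2`. -/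
noncomputable def probOf {D : Type*} [DecidableEq D] (π : D → ℝ) (D2 A : Finset D) : ℝ :=
  (∏ i ∈ A, π i) * ∏ i ∈ D2 \ A, (1 - π i)

/-- `f(T) = E_R[ν(R, T)]`: the expected maximum-cardinality matching between the
independently realized second-stage demand set and `T`. -/
noncomputable def expNu {D S : Type*} [DecidableEq D] (π : D → ℝ) (D2 : Finset D)
    (Ed : Finset (D × S)) (T : Finset S) : ℝ :=
  ∑ A ∈ D2.powerset, probOf π D2 A * (nuMatch Ed A T : ℝ)

set_option maxHeartbeats 1000000
open Finset
set_option linter.unusedSectionVars false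

section basics
variable {D S : Type*} [DecidableEq D] [DecidableEq S]
variable {Ed : Finset (D × S)} {A : Finset D} {T : Finset S}

lemma matchingBtw_empty : IsMatchingBtw Ed A T (∅ : Finset (D × S)) := by
  refine ⟨⟨empty_subset _, ?_⟩, ?_⟩ <;> simp

lemma nuSet_bdd : BddAbove {n | ∃ M, IsMatchingBtw Ed A T M ∧ M.card = n} := by
  refine ⟨Ed.card, fun n hn => ?_⟩
  obtain ⟨M, hM, rfl⟩ := hn
  exact card_le_card hM.1.1

lemma le_nuMatch {M : Finset (D × S)} (hM : IsMatchingBtw Ed A T M) :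
    M.card ≤ nuMatch Ed A T :=
  le_csSup nuSet_bdd ⟨M, hM, rfl⟩

lemma exists_nuMatch : ∃ M, IsMatchingBtw Ed A T M ∧ M.card = nuMatch Ed A T := by
  have h0 : (0 : ℕ) ∈ {n | ∃ M, IsMatchingBtw Ed A T M ∧ M.card = n} :=
    ⟨∅, matchingBtw_empty, card_empty⟩
  exact Nat.sSup_mem ⟨0, h0⟩ nuSet_bdd

lemma card_suppliesOf {M : Finset (D × S)} (hM : IsMatchingIn Ed M) :
    (suppliesOf M).card = M.card := by
  refine card_image_of_injOn fun e he e' he' hee' => ?_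
  by_contra h
  exact ((hM.2 e he e' he' h).2) hee'

lemma suppliesOf_subset {M : Finset (D × S)} (hM : IsMatchingBtw Ed A T M) :
    suppliesOf M ⊆ T := by
  intro j hj
  obtain ⟨e, he, rfl⟩ := mem_image.1 hj
  exact (hM.2 e he).2

lemma nuMatch_mono {T' : Finset S} (h : T ⊆ T') : nuMatch Ed A T ≤ nuMatch Ed A T' := by
  obtain ⟨M, hM, hcard⟩ := (exists_nuMatch (Ed := Ed) (A := A) (T := T))
  rw [← hcard]
  exact le_nuMatch ⟨hM.1, fun e he => ⟨(hM.2 e he).1, h (hM.2 e he).2⟩⟩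

/-- Removing supplies `U` from `T` costs at most `|suppliesOf N ∩ U|` relative to any
matching `N` between `A` and `T`. -/
lemma nu_sdiff_ge {N : Finset (D × S)} (hN : IsMatchingBtw Ed A T N) (U : Finset S) :
    (N.card : ℤ) - ((suppliesOf N ∩ U).card : ℤ) ≤ (nuMatch Ed A (T \ U) : ℤ) := by
  classical
  set N' := N.filter (fun e => e.2 ∉ U) with hN'
  have hsub : N' ⊆ N := filter_subset _ _
  have hmatch : IsMatchingBtw Ed A (T \ U) N' := by
    refine ⟨⟨hsub.trans hN.1.1, fun e he e' he' h => hN.1.2 e (hsub he) e' (hsub he') h⟩,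
      fun e he => ?_⟩
    rcases mem_filter.1 he with ⟨heN, heU⟩
    exact ⟨(hN.2 e heN).1, mem_sdiff.2 ⟨(hN.2 e heN).2, heU⟩⟩
  have hcard : N.card - (suppliesOf N ∩ U).card ≤ N'.card := by
    have hdiff : N \ N' ⊆ N.filter (fun e => e.2 ∈ U) := by
      intro e he
      rcases mem_sdiff.1 he with ⟨heN, heN'⟩
      refine mem_filter.2 ⟨heN, ?_⟩
      by_contra h
      exact heN' (mem_filter.2 ⟨heN, h⟩)
    have himg : (N.filter (fun e => e.2 ∈ U)).card ≤ (suppliesOf N ∩ U).card := by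
      have : ∀ e ∈ N.filter (fun e => e.2 ∈ U), e.2 ∈ suppliesOf N ∩ U := by
        intro e he
        rcases mem_filter.1 he with ⟨heN, heU⟩
        exact mem_inter.2 ⟨mem_image_of_mem _ heN, heU⟩
      refine card_le_card_of_injOn Prod.snd this ?_
      intro e he e' he' h
      by_contra hne
      exact (hN.1.2 e (mem_of_mem_filter e he) e' (mem_of_mem_filter e' he') hne).2 h
    have h2 : (N \ N').card ≤ (suppliesOf N ∩ U).card :=
      le_trans (card_le_card hdiff) himg
    have h3 := card_sdiff_of_subset hsub
    omega
  have := le_nuMatch hmatch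
  omega

end basics

section prob
variable {D : Type*} [DecidableEq D] {π : D → ℝ} {D2 : Finset D}

lemma probOf_nonneg (hπ : ∀ i ∈ D2, π i ∈ Set.Icc (0 : ℝ) 1) {A : Finset D}
    (hA : A ∈ D2.powerset) : 0 ≤ probOf π D2 A := by
  rcases mem_powerset.1 hA with hsub
  refine mul_nonneg (prod_nonneg fun i hi => (hπ i (hsub hi)).1)
    (prod_nonneg fun i hi => ?_)
  have := (hπ i (mem_sdiff.1 hi).1).2
  linarith

lemma sum_probOf (hπ : ∀ i ∈ D2, π i ∈ Set.Icc (0 : ℝ) 1) :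
    ∑ A ∈ D2.powerset, probOf π D2 A = 1 := by
  have h := Finset.prod_add π (fun i => 1 - π i) D2
  have h1 : ∏ i ∈ D2, (π i + (1 - π i)) = ∏ i ∈ D2, (1:ℝ) :=
    prod_congr rfl (fun i _ => by ring)
  rw [h1, prod_const_one] at h
  unfold probOf
  rw [← h]

lemma expNu_nonneg {S : Type*} (hπ : ∀ i ∈ D2, π i ∈ Set.Icc (0 : ℝ) 1)
    (Ed : Finset (D × S)) (T : Finset S) : 0 ≤ expNu π D2 Ed T :=
  sum_nonneg fun A hA => mul_nonneg (probOf_nonneg hπ hA) (Nat.cast_nonneg _)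

end prob

section omega

/-- The potential function used in the factor-revealing argument. -/
noncomputable def hgOmega (x : ℝ) : ℝ :=
  if x ≤ 1 / (Real.exp 1) ^ 2 then 1 else 1 / ((Real.exp 1) ^ 2 * x)

lemma exp_one_gt : (2.7 : ℝ) < Real.exp 1 := by
  have := Real.exp_one_gt_d9; norm_num at this ⊢; linarith

lemma exp_one_lt : Real.exp 1 < (2.72 : ℝ) := by
  have := Real.exp_one_lt_d9; norm_num at this ⊢; linarith

lemma e_sq_pos : (0:ℝ) < (Real.exp 1)^2 := by
  have := exp_one_gt; nlinarith

lemma hgOmega_nonneg {x : ℝ} : 0 ≤ hgOmega x := by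
  rw [hgOmega]
  have he := e_sq_pos
  by_cases h : x ≤ 1 / (Real.exp 1)^2
  · rw [if_pos h]; norm_num
  · rw [if_neg h]
    push_neg at h
    have hx : 0 < x := lt_trans (by positivity) h
    positivity

lemma hgOmega_le_one {x : ℝ} (hx : 0 ≤ x) : hgOmega x ≤ 1 := by
  rw [hgOmega]
  have he := e_sq_pos
  by_cases h : x ≤ 1 / (Real.exp 1)^2
  · rw [if_pos h]
  · rw [if_neg h]
    push_neg at h
    have hx' : (0:ℝ) < x := lt_trans (by positivity) h
    rw [div_le_one (by positivity)]
    have h2 := (div_lt_iff₀ he).1 h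
    nlinarith

lemma hgOmega_antitone {a b : ℝ} (ha : 0 ≤ a) (hab : a ≤ b) : hgOmega b ≤ hgOmega a := by
  have he := e_sq_pos
  by_cases h1 : a ≤ 1 / (Real.exp 1)^2
  · calc hgOmega b ≤ 1 := hgOmega_le_one (ha.trans hab)
    _ = hgOmega a := by rw [hgOmega, if_pos h1]
  · have h2 : ¬ b ≤ 1 / (Real.exp 1)^2 := fun hb => h1 (hab.trans hb)
    rw [hgOmega, hgOmega, if_neg h1, if_neg h2]
    push_neg at h1
    have ha' : 0 < a := lt_trans (by positivity) h1
    have hb' : 0 < b := lt_of_lt_of_le ha' hab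
    rw [div_le_div_iff₀ (by positivity) (by positivity)]
    nlinarith

/-- Per-vertex inequality on covered supplies. -/
lemma hgOmega_W_bound {x : ℝ} (hx0 : 0 ≤ x) (hx1 : x ≤ 1) :
    (2 * Real.exp 1 - 1) / (Real.exp 1)^2 - x ≤ (1 - x) * hgOmega x := by
  have he := e_sq_pos
  have he1 := exp_one_gt
  rw [hgOmega]
  by_cases h : x ≤ 1 / (Real.exp 1)^2
  · rw [if_pos h, mul_one, div_sub' (ne_of_gt he), div_le_iff₀ he]
    nlinarith [sq_nonneg (Real.exp 1 - 1)]
  · rw [if_neg h]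
    push_neg at h
    have hx' : 0 < x := lt_trans (by positivity) h
    rw [← sub_nonneg]
    set E := Real.exp 1 with hEdef
    have hE : (0:ℝ) < E := by rw [hEdef]; positivity
    have expand : (1 - x) * (1 / (E^2 * x)) -
        ((2 * E - 1) / E^2 - x)
        = ((E * x - 1)^2) / (E^2 * x) := by
      field_simp
      ring
    rw [expand]
    positivity

/-- Per-vertex inequality on free supplies. -/
lemma hgOmega_T_bound {x : ℝ} (hx0 : 0 ≤ x) :
    x * hgOmega x ≤ min x (1 / (Real.exp 1)^2) := by
  have he := e_sq_pos
  rw [hgOmega]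
  by_cases h : x ≤ 1 / (Real.exp 1)^2
  · rw [if_pos h, mul_one]
    exact le_min le_rfl h
  · rw [if_neg h]
    push_neg at h
    have hx' : 0 < x := lt_trans (by positivity) h
    set E := Real.exp 1 with hEdef
    have hE : (0:ℝ) < E := by rw [hEdef]; positivity
    have heq : x * (1 / (E^2 * x)) = 1 / E^2 := by
      field_simp
    rw [heq]
    exact le_min h.le le_rfl

end omega

section hall
variable {D S : Type*} [DecidableEq D] [DecidableEq S]
variable (Ed : Finset (D × S)) (D1 : Finset D) (Ssup : Finset S)

/-- Neighborhood of a set of supply vertices in `D1`. -/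
def Nbh (U : Finset S) : Finset D := U.biUnion (fun j => D1.filter (fun i => (i, j) ∈ Ed))

/-- `U` is the supply set of some matching between `D1` and `Ssup`. -/
def MatchableSet (U : Finset S) : Prop :=
  ∃ M, IsMatchingBtw Ed D1 Ssup M ∧ suppliesOf M = U

variable {Ed D1 Ssup}

lemma Nbh_mono {U V : Finset S} (h : U ⊆ V) : Nbh Ed D1 U ⊆ Nbh Ed D1 V :=
  biUnion_subset_biUnion_of_subset_left _ h

lemma Nbh_union (U V : Finset S) :
    Nbh Ed D1 (U ∪ V) = Nbh Ed D1 U ∪ Nbh Ed D1 V := by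
  unfold Nbh
  ext i
  simp only [mem_biUnion, mem_union, mem_filter]
  constructor
  · rintro ⟨j, hj | hj, h2⟩
    · exact Or.inl ⟨j, hj, h2⟩
    · exact Or.inr ⟨j, hj, h2⟩
  · rintro (⟨j, hj, h2⟩ | ⟨j, hj, h2⟩)
    exacts [⟨j, Or.inl hj, h2⟩, ⟨j, Or.inr hj, h2⟩]

lemma matchable_subset {U : Finset S} (h : MatchableSet Ed D1 Ssup U) : U ⊆ Ssup := by
  obtain ⟨M, hM, rfl⟩ := h
  intro j hj
  obtain ⟨e, he, rfl⟩ := mem_image.1 hj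
  exact (hM.2 e he).2

lemma hall_easy {U : Finset S} (h : MatchableSet Ed D1 Ssup U) :
    ∀ V ⊆ U, V.card ≤ (Nbh Ed D1 V).card := by
  obtain ⟨M, hM, rfl⟩ := h
  intro V hV
  set M' := M.filter (fun e => e.2 ∈ V) with hM'def
  have hM'sub : M' ⊆ M := filter_subset _ _
  have hVeq : V = suppliesOf M' := by
    apply Finset.Subset.antisymm
    · intro j hj
      obtain ⟨e, he, rfl⟩ := mem_image.1 (hV hj)
      exact mem_image_of_mem _ (mem_filter.2 ⟨he, hj⟩)
    · intro j hj
      obtain ⟨e, he, rfl⟩ := mem_image.1 hj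
      exact (mem_filter.1 he).2
  have hmatch' : IsMatchingIn Ed M' :=
    ⟨hM'sub.trans hM.1.1, fun e he e' he' hne => hM.1.2 e (hM'sub he) e' (hM'sub he') hne⟩
  have h1 : V.card = M'.card := by rw [hVeq, card_suppliesOf hmatch']
  have h2 : M'.card = (M'.image Prod.fst).card := by
    refine (card_image_of_injOn fun e he e' he' hee' => ?_).symm
    by_contra h
    exact ((hmatch'.2 e he e' he' h).1) hee'
  have h3 : M'.image Prod.fst ⊆ Nbh Ed D1 V := by
    intro i hi
    obtain ⟨e, he, rfl⟩ := mem_image.1 hi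
    rcases mem_filter.1 he with ⟨heM, heV⟩
    exact mem_biUnion.2 ⟨e.2, heV, mem_filter.2 ⟨(hM.2 e heM).1, by simpa using hM.1.1 heM⟩⟩
  rw [h1, h2]
  exact card_le_card h3

lemma hall_hard {U : Finset S} (hU : U ⊆ Ssup)
    (hall : ∀ V ⊆ U, V.card ≤ (Nbh Ed D1 V).card) : MatchableSet Ed D1 Ssup U := by
  classical
  set t : {j // j ∈ U} → Finset D := fun j => D1.filter (fun i => (i, j.1) ∈ Ed) with ht
  have hprem : ∀ s : Finset {j // j ∈ U}, s.card ≤ (s.biUnion t).card := by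
    intro s
    have hinj : (s.image Subtype.val).card = s.card :=
      card_image_of_injOn (Subtype.val_injective.injOn)
    have hsub : s.image Subtype.val ⊆ U := by
      intro j hj
      obtain ⟨a, _, rfl⟩ := mem_image.1 hj
      exact a.2
    have hb : Nbh Ed D1 (s.image Subtype.val) = s.biUnion t := by
      unfold Nbh
      ext i
      simp only [mem_biUnion, mem_image, ht, mem_filter]
      constructor
      · rintro ⟨j, ⟨a, ha, rfl⟩, h2⟩
        exact ⟨a, ha, h2⟩
      · rintro ⟨a, ha, h2⟩
        exact ⟨a.1, ⟨a, ha, rfl⟩, h2⟩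
    have := hall _ hsub
    rw [hb] at this
    omega
  obtain ⟨f, hfinj, hft⟩ := (Finset.all_card_le_biUnion_card_iff_exists_injective t).1 hprem
  set M : Finset (D × S) := U.attach.image (fun j => (f j, j.1)) with hM
  have hmem : ∀ e ∈ M, ∃ j : {x // x ∈ U}, e = (f j, j.1) := by
    intro e he
    obtain ⟨j, _, rfl⟩ := mem_image.1 he
    exact ⟨j, rfl⟩
  refine ⟨M, ⟨⟨?_, ?_⟩, ?_⟩, ?_⟩
  · intro e he
    obtain ⟨j, rfl⟩ := hmem e he
    have := hft j
    rw [ht] at this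
    exact (mem_filter.1 this).2
  · intro e he e' he' hne
    obtain ⟨j, rfl⟩ := hmem e he
    obtain ⟨j', rfl⟩ := hmem e' he'
    have hjj : j ≠ j' := by rintro rfl; exact hne rfl
    constructor
    · simpa using fun hc => hjj (hfinj hc)
    · simpa using fun hc => hjj (Subtype.ext hc)
  · intro e he
    obtain ⟨j, rfl⟩ := hmem e he
    have := hft j
    rw [ht] at this
    exact ⟨(mem_filter.1 this).1, hU j.2⟩
  · rw [hM]
    unfold suppliesOf
    rw [image_image]
    ext j
    simp

/-- Union of two tight sets (w.r.t. a Hall condition) is tight. -/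
lemma tight_union {W : Finset S} (hallW : ∀ V ⊆ W, V.card ≤ (Nbh Ed D1 V).card)
    {X Y : Finset S} (hX : X ⊆ W) (hY : Y ⊆ W)
    (hXt : (Nbh Ed D1 X).card = X.card) (hYt : (Nbh Ed D1 Y).card = Y.card) :
    (Nbh Ed D1 (X ∪ Y)).card = (X ∪ Y).card := by
  have h1 : (X ∪ Y).card ≤ (Nbh Ed D1 (X ∪ Y)).card := hallW _ (union_subset hX hY)
  have h2 : (X ∩ Y).card ≤ (Nbh Ed D1 (X ∩ Y)).card := hallW _ ((inter_subset_left).trans hX)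
  have h3 : Nbh Ed D1 (X ∩ Y) ⊆ Nbh Ed D1 X ∩ Nbh Ed D1 Y :=
    subset_inter (Nbh_mono inter_subset_left) (Nbh_mono inter_subset_right)
  have h4 : (Nbh Ed D1 (X ∪ Y)).card + (Nbh Ed D1 (X ∩ Y)).card
      ≤ X.card + Y.card := by
    rw [Nbh_union]
    calc (Nbh Ed D1 X ∪ Nbh Ed D1 Y).card + (Nbh Ed D1 (X ∩ Y)).card
        ≤ (Nbh Ed D1 X ∪ Nbh Ed D1 Y).card + (Nbh Ed D1 X ∩ Nbh Ed D1 Y).card :=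
          Nat.add_le_add_left (card_le_card h3) _
      _ = (Nbh Ed D1 X).card + (Nbh Ed D1 Y).card := card_union_add_card_inter _ _
      _ = X.card + Y.card := by rw [hXt, hYt]
  have h5 := card_union_add_card_inter X Y
  omega

lemma tight_biUnion {W : Finset S} (hallW : ∀ V ⊆ W, V.card ≤ (Nbh Ed D1 V).card)
    (s : Finset S) (Ub : S → Finset S)
    (h : ∀ b ∈ s, Ub b ⊆ W ∧ (Nbh Ed D1 (Ub b)).card = (Ub b).card) :
    s.biUnion Ub ⊆ W ∧ (Nbh Ed D1 (s.biUnion Ub)).card = (s.biUnion Ub).card := by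
  classical
  induction s using Finset.induction_on with
  | empty => simp [Nbh]
  | @insert b sb hb hind =>
    have h1 := h b (mem_insert_self _ _)
    have h2 := hind (fun x hx => h x (mem_insert_of_mem hx))
    rw [biUnion_insert]
    exact ⟨union_subset h1.1 h2.1, tight_union hallW h1.1 h2.1 h1.2 h2.2⟩

/-- The exchange property: a matchable set smaller than another matchable set can be
augmented by one element from it. -/
lemma matchable_exchange {W B : Finset S} (hW : MatchableSet Ed D1 Ssup W)
    (hB : MatchableSet Ed D1 Ssup B) (hcard : W.card < B.card) :
    ∃ b ∈ B, b ∉ W ∧ MatchableSet Ed D1 Ssup (insert b W) := by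
  classical
  by_contra hcon
  push_neg at hcon
  have hallW := hall_easy hW
  have hallB := hall_easy hB
  have hWs := matchable_subset hW
  have hBs := matchable_subset hB
  -- for every b in B \ W there is a tight subset U_b of W with Nbh {b} ⊆ Nbh U_b
  have key : ∀ b ∈ B \ W, ∃ Ub : Finset S, Ub ⊆ W ∧
      (Nbh Ed D1 Ub).card = Ub.card ∧ Nbh Ed D1 {b} ⊆ Nbh Ed D1 Ub := by
    intro b hb
    rcases mem_sdiff.1 hb with ⟨hbB, hbW⟩
    have hnm : ¬ MatchableSet Ed D1 Ssup (insert b W) := hcon b hbB hbW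
    have hins : insert b W ⊆ Ssup := insert_subset (hBs hbB) hWs
    have : ¬ (∀ V ⊆ insert b W, V.card ≤ (Nbh Ed D1 V).card) := by
      intro hhall
      exact hnm (hall_hard hins hhall)
    push_neg at this
    obtain ⟨V, hVsub, hVcard⟩ := this
    have hbV : b ∈ V := by
      by_contra hbV
      have : V ⊆ W := fun x hx => by
        rcases mem_insert.1 (hVsub hx) with rfl | h
        · exact absurd hx hbV
        · exact h
      exact absurd (hallW V this) (by omega)
    set Ub := V.erase b with hUb
    have hUbW : Ub ⊆ W := by
      intro x hx
      rcases mem_erase.1 hx with ⟨hxb, hxV⟩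
      rcases mem_insert.1 (hVsub hxV) with rfl | h
      · exact absurd rfl hxb
      · exact h
    have hVeq : V = insert b Ub := by
      rw [hUb, insert_erase hbV]
    have hcard1 : Ub.card = V.card - 1 := by
      rw [hUb, card_erase_of_mem hbV]
    have hUbHall : Ub.card ≤ (Nbh Ed D1 Ub).card := hallW _ hUbW
    have hsub1 : Nbh Ed D1 Ub ⊆ Nbh Ed D1 V := Nbh_mono (by rw [hVeq]; exact subset_insert _ _)
    have hVb : Nbh Ed D1 V = Nbh Ed D1 {b} ∪ Nbh Ed D1 Ub := by
      have : ({b} : Finset S) ∪ Ub = insert b Ub := by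
        ext x
        simp only [mem_union, mem_singleton, mem_insert]
      rw [hVeq, ← Nbh_union, this]
    have hcard2 : (Nbh Ed D1 V).card ≤ V.card - 1 := by omega
    have hVpos : 0 < V.card := card_pos.2 ⟨b, hbV⟩
    have htight : (Nbh Ed D1 Ub).card = Ub.card := by
      have := card_le_card hsub1
      omega
    have heq : Nbh Ed D1 Ub = Nbh Ed D1 V := by
      apply Finset.eq_of_subset_of_card_le hsub1
      omega
    refine ⟨Ub, hUbW, htight, ?_⟩
    rw [heq, hVb]
    exact subset_union_left
  -- choose the tight sets and take their union
  choose! Ub hUbW hUbt hUbn using key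
  set U : Finset S := (B \ W).biUnion Ub with hU
  have hUW : U ⊆ W := by
    intro x hx
    obtain ⟨b, hb, hxb⟩ := mem_biUnion.1 hx
    exact hUbW b hb hxb
  have hUprop := tight_biUnion hallW (B \ W) Ub (fun b hb => ⟨hUbW b hb, hUbt b hb⟩)
  have hUW : U ⊆ W := hUprop.1
  have hUt : (Nbh Ed D1 U).card = U.card := hUprop.2
  -- the contradiction count
  set Y : Finset S := (B ∩ U) ∪ (B \ W) with hY
  have hYB : Y ⊆ B := union_subset inter_subset_left sdiff_subset
  have hYhall : Y.card ≤ (Nbh Ed D1 Y).card := hallB Y hYB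
  have hNY : Nbh Ed D1 Y ⊆ Nbh Ed D1 U := by
    rw [hY, Nbh_union]
    apply union_subset
    · exact Nbh_mono inter_subset_right
    · intro i hi
      obtain ⟨b, hb, hib⟩ := mem_biUnion.1 hi
      exact Nbh_mono (subset_biUnion_of_mem Ub hb)
        (hUbn b hb (mem_biUnion.2 ⟨b, mem_singleton_self b, hib⟩))
  have hdisjY : Disjoint (B ∩ U) (B \ W) := by
    apply disjoint_left.2
    intro x hx hx2
    exact (mem_sdiff.1 hx2).2 (hUW (mem_inter.1 hx).2)
  have hYcard : Y.card = (B ∩ U).card + (B \ W).card := card_union_of_disjoint hdisjY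
  have hUcard : U.card = (U ∩ B).card + (U \ B).card := (card_inter_add_card_sdiff _ _).symm
  have hWB : (W \ B).card < (B \ W).card := by
    have h1 := card_inter_add_card_sdiff W B
    have h2 := card_inter_add_card_sdiff B W
    rw [inter_comm] at h2
    omega
  have hUB : (U \ B).card ≤ (W \ B).card := card_le_card (sdiff_subset_sdiff hUW le_rfl)
  have hIC : (B ∩ U).card = (U ∩ B).card := by rw [inter_comm]
  have hfin : (Nbh Ed D1 Y).card ≤ U.card := le_trans (card_le_card hNY) (le_of_eq hUt)
  omega

/-- Any matchable set extends to a matchable set of the same size as any larger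
matchable set. -/
lemma matchable_extend : ∀ (n : ℕ) (W : Finset S), MatchableSet Ed D1 Ssup W →
    ∀ B : Finset S, MatchableSet Ed D1 Ssup B → B.card - W.card = n → W.card ≤ B.card →
    ∃ W', W ⊆ W' ∧ W'.card = B.card ∧ MatchableSet Ed D1 Ssup W' := by
  intro n
  induction n with
  | zero =>
    intro W hW B hB hn hle
    exact ⟨W, Finset.Subset.refl _, by omega, hW⟩
  | succ m ih =>
    intro W hW B hB hn hle
    have hlt : W.card < B.card := by omega
    obtain ⟨b, hbB, hbW, hbm⟩ := matchable_exchange hW hB hlt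
    have hcard : (insert b W).card = W.card + 1 := card_insert_of_notMem hbW
    obtain ⟨W', hs, hc, hm⟩ := ih (insert b W) hbm B hB (by omega) (by omega)
    exact ⟨W', (subset_insert _ _).trans hs, hc, hm⟩

end hall


section balance
variable {D S : Type*} [DecidableEq D] [DecidableEq S]
variable {Ed : Finset (D × S)} {D1 : Finset D} {Ssup : Finset S}
variable {g : ℝ → ℝ} {xs : D → S → ℝ}

/-- If a supply vertex `j` adjacent to demand `i` is not saturated, then row `i` is full. -/
lemma row_full (hg_mono : StrictMono g)
    (hxs : IsFracMatching Ed D1 Ssup xs)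
    (hxs_opt : ∀ x, IsFracMatching Ed D1 Ssup x →
      PgObjUnw g D1 Ssup xs ≤ PgObjUnw g D1 Ssup x)
    {i : D} {j : S} (hi : i ∈ D1) (hj : j ∈ Ssup) (hij : (i, j) ∈ Ed)
    (hload : ∑ i' ∈ D1, xs i' j < 1) :
    ∑ j' ∈ Ssup, xs i j' = 1 := by
  classical
  by_contra hrow
  have hrow' : ∑ j' ∈ Ssup, xs i j' < 1 := lt_of_le_of_ne (hxs.2.2.1 i hi) hrow
  set ε : ℝ := min (1 - ∑ i' ∈ D1, xs i' j) (1 - ∑ j' ∈ Ssup, xs i j') with hε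
  have hε0 : 0 < ε := lt_min (by linarith) (by linarith)
  set xs' : D → S → ℝ := fun a b => xs a b + (if a = i ∧ b = j then ε else 0) with hxs'
  have hcol : ∀ b : S, ∑ i' ∈ D1, xs' i' b
      = (∑ i' ∈ D1, xs i' b) + (if b = j then ε else 0) := by
    intro b
    rw [hxs']
    rw [Finset.sum_add_distrib]
    congr 1
    by_cases hbj : b = j
    · subst hbj
      rw [if_pos rfl]
      have : (∑ a ∈ D1, if a = i ∧ b = b then ε else 0)
          = ∑ a ∈ D1, if a = i then ε else 0 := by
        apply Finset.sum_congr rfl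
        intro a _
        simp
      rw [this, Finset.sum_ite_eq' D1 i (fun _ => ε)]
      simp [hi]
    · rw [if_neg hbj]
      apply Finset.sum_eq_zero
      intro a _
      simp [hbj]
  have hfrac' : IsFracMatching Ed D1 Ssup xs' := by
    refine ⟨?_, ?_, ?_, ?_⟩
    · intro a b
      have := hxs.1 a b
      rw [hxs']
      dsimp only
      split <;> [linarith; linarith]
    · intro a b hab
      rw [hxs']
      dsimp only
      have h0 := hxs.2.1 a b hab
      split
      · rename_i h
        rw [h.1, h.2] at hab
        exact absurd hij hab
      · simpa using h0
    · intro a ha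
      rw [hxs']
      dsimp only
      rw [Finset.sum_add_distrib]
      by_cases hai : a = i
      · subst hai
        have : ∑ b ∈ Ssup, (if a = a ∧ b = j then ε else 0) = ε := by
          simp only [true_and]
          rw [Finset.sum_ite_eq' Ssup j (fun _ => ε)]
          simp [hj]
        rw [this]
        have := min_le_right (1 - ∑ i' ∈ D1, xs i' j) (1 - ∑ j' ∈ Ssup, xs a j')
        rw [← hε] at this
        linarith
      · have : ∑ b ∈ Ssup, (if a = i ∧ b = j then ε else 0) = 0 := by
          apply Finset.sum_eq_zero
          intro b _
          simp [hai]
        rw [this, add_zero]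
        exact hxs.2.2.1 a ha
    · intro b hb
      rw [hcol b]
      by_cases hbj : b = j
      · subst hbj
        rw [if_pos rfl]
        have := min_le_left (1 - ∑ i' ∈ D1, xs i' b) (1 - ∑ j' ∈ Ssup, xs i j')
        rw [← hε] at this
        linarith
      · rw [if_neg hbj, add_zero]
        exact hxs.2.2.2 b hb
  have hobj : PgObjUnw g D1 Ssup xs' < PgObjUnw g D1 Ssup xs := by
    unfold PgObjUnw
    have hsplit : ∀ b ∈ Ssup, g (1 - ∑ i' ∈ D1, xs' i' b) ≤ g (1 - ∑ i' ∈ D1, xs i' b) := by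
      intro b _
      rw [hcol b]
      by_cases hbj : b = j
      · subst hbj
        rw [if_pos rfl]
        exact le_of_lt (hg_mono.lt_iff_lt.2 (by linarith))
      · rw [if_neg hbj, add_zero]
    apply Finset.sum_lt_sum hsplit
    refine ⟨j, hj, ?_⟩
    rw [hcol j, if_pos rfl]
    exact hg_mono.lt_iff_lt.2 (by linarith)
  exact absurd (hxs_opt xs' hfrac') (not_le.2 hobj)

/-- Two-point strict convexity: moving mass inward strictly decreases the sum. -/
lemma strictConvexOn_two_point (hg_conv : StrictConvexOn ℝ Set.univ g)
    {a b ε : ℝ} (hab : a < b) (hε : 0 < ε) (hεle : ε ≤ (b - a) / 2) :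
    g (a + ε) + g (b - ε) < g a + g b := by
  set t : ℝ := ε / (b - a) with ht
  have hba : 0 < b - a := by linarith
  have ht0 : 0 < t := div_pos hε hba
  have ht1 : t < 1 := by
    rw [ht, div_lt_one hba]
    linarith
  have h1 : a + ε = (1 - t) * a + t * b := by
    rw [ht]; field_simp; ring
  have h2 : b - ε = t * a + (1 - t) * b := by
    rw [ht]; field_simp; ring
  have hmem : a ∈ (Set.univ : Set ℝ) := Set.mem_univ _
  have hmem' : b ∈ (Set.univ : Set ℝ) := Set.mem_univ _
  have c1 := hg_conv.2 hmem hmem' (ne_of_lt hab) (by linarith : (0:ℝ) < 1 - t) ht0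
    (by ring : (1 - t) + t = 1)
  have c2 := hg_conv.2 hmem hmem' (ne_of_lt hab) ht0 (by linarith : (0:ℝ) < 1 - t)
    (by ring : t + (1 - t) = 1)
  simp only [smul_eq_mul] at c1 c2
  rw [← h1] at c1
  rw [← h2] at c2
  linarith

/-- Local balance: if demand `i` puts mass on `j'` while the unsaturated `j` is adjacent
to `i`, then the load of `j'` is at most the load of `j`. -/
lemma local_balance (hg_conv : StrictConvexOn ℝ Set.univ g)
    (hxs : IsFracMatching Ed D1 Ssup xs)
    (hxs_opt : ∀ x, IsFracMatching Ed D1 Ssup x →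
      PgObjUnw g D1 Ssup xs ≤ PgObjUnw g D1 Ssup x)
    {i : D} {j j' : S} (hi : i ∈ D1) (hj : j ∈ Ssup) (hj' : j' ∈ Ssup)
    (hij : (i, j) ∈ Ed) (hpos : 0 < xs i j')
    (hload : ∑ i' ∈ D1, xs i' j < 1) :
    ∑ i' ∈ D1, xs i' j' ≤ ∑ i' ∈ D1, xs i' j := by
  classical
  by_contra hcon
  push_neg at hcon
  have hjj' : j ≠ j' := by
    rintro rfl
    exact lt_irrefl _ hcon
  set Lj := ∑ i' ∈ D1, xs i' j with hLj
  set Lj' := ∑ i' ∈ D1, xs i' j' with hLj'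
  set ε : ℝ := min (min (xs i j') ((Lj' - Lj) / 2)) (1 - Lj) with hε
  have hε0 : 0 < ε := by
    apply lt_min (lt_min hpos (by linarith)) (by linarith)
  have hε1 : ε ≤ xs i j' := le_trans (min_le_left _ _) (min_le_left _ _)
  have hε2 : ε ≤ (Lj' - Lj) / 2 := le_trans (min_le_left _ _) (min_le_right _ _)
  have hε3 : ε ≤ 1 - Lj := min_le_right _ _
  set xs' : D → S → ℝ := fun a b => xs a b + (if a = i ∧ b = j then ε else 0)
      - (if a = i ∧ b = j' then ε else 0) with hxs'
  have hcol : ∀ b : S, ∑ i' ∈ D1, xs' i' b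
      = (∑ i' ∈ D1, xs i' b) + (if b = j then ε else 0) - (if b = j' then ε else 0) := by
    intro b
    rw [hxs']
    dsimp only
    rw [Finset.sum_sub_distrib, Finset.sum_add_distrib]
    congr 2
    · by_cases hbj : b = j
      · subst hbj
        rw [if_pos rfl]
        have : (∑ a ∈ D1, if a = i ∧ b = b then ε else 0)
            = ∑ a ∈ D1, if a = i then ε else 0 :=
          Finset.sum_congr rfl (fun a _ => by simp)
        rw [this, Finset.sum_ite_eq' D1 i (fun _ => ε)]
        simp [hi]
      · rw [if_neg hbj]
        exact Finset.sum_eq_zero (fun a _ => by simp [hbj])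
    · by_cases hbj : b = j'
      · subst hbj
        rw [if_pos rfl]
        have : (∑ a ∈ D1, if a = i ∧ b = b then ε else 0)
            = ∑ a ∈ D1, if a = i then ε else 0 :=
          Finset.sum_congr rfl (fun a _ => by simp)
        rw [this, Finset.sum_ite_eq' D1 i (fun _ => ε)]
        simp [hi]
      · rw [if_neg hbj]
        exact Finset.sum_eq_zero (fun a _ => by simp [hbj])
  have hfrac' : IsFracMatching Ed D1 Ssup xs' := by
    refine ⟨?_, ?_, ?_, ?_⟩
    · intro a b
      have h0 := hxs.1 a b
      rw [hxs']
      dsimp only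
      by_cases h1 : a = i ∧ b = j
      · rw [if_pos h1, if_neg (by rintro ⟨rfl, rfl⟩; exact hjj' (h1.2.symm ▸ rfl))]
        linarith
      · rw [if_neg h1]
        by_cases h2 : a = i ∧ b = j'
        · rw [if_pos h2, h2.1, h2.2]
          linarith
        · rw [if_neg h2]
          linarith
    · intro a b hab
      have h0 := hxs.2.1 a b hab
      rw [hxs']
      dsimp only
      have hb1 : ¬(a = i ∧ b = j) := by
        rintro ⟨rfl, rfl⟩
        exact hab hij
      have hb2 : ¬(a = i ∧ b = j') := by
        rintro ⟨rfl, rfl⟩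
        have := hxs.2.1 a b hab
        linarith
      rw [if_neg hb1, if_neg hb2, h0]
      ring
    · intro a ha
      rw [hxs']
      dsimp only
      rw [Finset.sum_sub_distrib, Finset.sum_add_distrib]
      by_cases hai : a = i
      · subst hai
        have e1 : (∑ b ∈ Ssup, if a = a ∧ b = j then ε else 0) = ε := by
          have : (∑ b ∈ Ssup, if a = a ∧ b = j then ε else 0)
              = ∑ b ∈ Ssup, if b = j then ε else 0 :=
            Finset.sum_congr rfl (fun b _ => by simp)
          rw [this, Finset.sum_ite_eq' Ssup j (fun _ => ε)]
          simp [hj]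
        have e2 : (∑ b ∈ Ssup, if a = a ∧ b = j' then ε else 0) = ε := by
          have : (∑ b ∈ Ssup, if a = a ∧ b = j' then ε else 0)
              = ∑ b ∈ Ssup, if b = j' then ε else 0 :=
            Finset.sum_congr rfl (fun b _ => by simp)
          rw [this, Finset.sum_ite_eq' Ssup j' (fun _ => ε)]
          simp [hj']
        rw [e1, e2]
        have := hxs.2.2.1 a ha
        linarith
      · have e1 : (∑ b ∈ Ssup, if a = i ∧ b = j then ε else 0) = 0 :=
          Finset.sum_eq_zero (fun b _ => by simp [hai])
        have e2 : (∑ b ∈ Ssup, if a = i ∧ b = j' then ε else 0) = 0 :=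
          Finset.sum_eq_zero (fun b _ => by simp [hai])
        rw [e1, e2]
        have := hxs.2.2.1 a ha
        linarith
    · intro b hb
      rw [hcol b]
      by_cases hbj : b = j
      · subst hbj
        rw [if_pos rfl, if_neg hjj']
        linarith
      · rw [if_neg hbj]
        by_cases hbj' : b = j'
        · subst hbj'
          rw [if_pos rfl]
          have := hxs.2.2.2 b hb
          linarith [hε0]
        · rw [if_neg hbj']
          have := hxs.2.2.2 b hb
          linarith
  have hobj : PgObjUnw g D1 Ssup xs' < PgObjUnw g D1 Ssup xs := by
    unfold PgObjUnw
    have hkey : ∀ b ∈ Ssup, b ∉ ({j, j'} : Finset S) →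
        g (1 - ∑ i' ∈ D1, xs' i' b) = g (1 - ∑ i' ∈ D1, xs i' b) := by
      intro b _ hbm
      simp only [mem_insert, mem_singleton] at hbm
      push_neg at hbm
      rw [hcol b, if_neg hbm.1, if_neg hbm.2]
      ring_nf
    have hsub : ({j, j'} : Finset S) ⊆ Ssup := by
      intro x hx
      simp only [mem_insert, mem_singleton] at hx
      rcases hx with rfl | rfl
      exacts [hj, hj']
    have hsplit1 : ∑ b ∈ Ssup, g (1 - ∑ i' ∈ D1, xs' i' b)
        = ∑ b ∈ Ssup \ {j, j'}, g (1 - ∑ i' ∈ D1, xs' i' b)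
          + ∑ b ∈ ({j, j'} : Finset S), g (1 - ∑ i' ∈ D1, xs' i' b) :=
      (Finset.sum_sdiff hsub).symm
    have hsplit2 : ∑ b ∈ Ssup, g (1 - ∑ i' ∈ D1, xs i' b)
        = ∑ b ∈ Ssup \ {j, j'}, g (1 - ∑ i' ∈ D1, xs i' b)
          + ∑ b ∈ ({j, j'} : Finset S), g (1 - ∑ i' ∈ D1, xs i' b) :=
      (Finset.sum_sdiff hsub).symm
    have heqout : ∑ b ∈ Ssup \ {j, j'}, g (1 - ∑ i' ∈ D1, xs' i' b)
        = ∑ b ∈ Ssup \ {j, j'}, g (1 - ∑ i' ∈ D1, xs i' b) := by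
      apply Finset.sum_congr rfl
      intro b hbm
      rcases Finset.mem_sdiff.1 hbm with ⟨hb1, hb2⟩
      exact hkey b hb1 hb2
    have hpair1 : ∑ b ∈ ({j, j'} : Finset S), g (1 - ∑ i' ∈ D1, xs' i' b)
        = g (1 - ∑ i' ∈ D1, xs' i' j) + g (1 - ∑ i' ∈ D1, xs' i' j') :=
      Finset.sum_pair hjj'
    have hpair2 : ∑ b ∈ ({j, j'} : Finset S), g (1 - ∑ i' ∈ D1, xs i' b)
        = g (1 - Lj) + g (1 - Lj') :=
      Finset.sum_pair hjj'
    have hvj : ∑ i' ∈ D1, xs' i' j = Lj + ε := by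
      rw [hcol j, if_pos rfl, if_neg hjj']
      rw [← hLj]; ring
    have hvj' : ∑ i' ∈ D1, xs' i' j' = Lj' - ε := by
      rw [hcol j', if_neg (Ne.symm hjj'), if_pos rfl]
      rw [← hLj']; ring
    have hconv : g (1 - Lj - ε) + g (1 - Lj' + ε) < g (1 - Lj') + g (1 - Lj) := by
      have h2p := strictConvexOn_two_point hg_conv
        (a := 1 - Lj') (b := 1 - Lj) (ε := ε) (by linarith) hε0 (by linarith)
      linarith
    rw [hsplit1, hsplit2, heqout, hpair1, hpair2, hvj, hvj']
    have : (1 - (Lj + ε)) = 1 - Lj - ε := by ring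
    rw [this]
    have : (1 - (Lj' - ε)) = 1 - Lj' + ε := by ring
    rw [this]
    linarith
  exact absurd (hxs_opt xs' hfrac') (not_le.2 hobj)

end balance

section star
variable {D S : Type*} [DecidableEq D] [DecidableEq S]
variable {Ed : Finset (D × S)} {D1 : Finset D} {Ssup : Finset S}
variable {g : ℝ → ℝ} {xs : D → S → ℝ}

lemma mass_bound (hg_mono : StrictMono g) (hg_conv : StrictConvexOn ℝ Set.univ g)
    (hxs : IsFracMatching Ed D1 Ssup xs)
    (hxs_opt : ∀ x, IsFracMatching Ed D1 Ssup x →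
      PgObjUnw g D1 Ssup xs ≤ PgObjUnw g D1 Ssup x)
    {M0 : Finset (D × S)} (hM0 : IsMatchingBtw Ed D1 Ssup M0) :
    ∑ j ∈ suppliesOf M0, hgOmega (∑ i ∈ D1, xs i j)
      ≤ ∑ j ∈ Ssup, (∑ i ∈ D1, xs i j) * hgOmega (∑ i ∈ D1, xs i j) := by
  classical
  set L : S → ℝ := fun j => ∑ i ∈ D1, xs i j with hLdef
  have hL0 : ∀ j, 0 ≤ L j := fun j => Finset.sum_nonneg (fun i _ => hxs.1 i j)
  have hL1 : ∀ j ∈ Ssup, L j ≤ 1 := fun j hj => hxs.2.2.2 j hj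
  have hsndinj : Set.InjOn Prod.snd (M0 : Set (D × S)) := by
    intro e he e' he' hee'
    by_contra h
    exact ((hM0.1.2 e he e' he' h).2) hee'
  -- LHS as a sum over edges
  have hstep1 : ∑ j ∈ suppliesOf M0, hgOmega (L j) = ∑ e ∈ M0, hgOmega (L e.2) := by
    unfold suppliesOf
    rw [Finset.sum_image (fun e he e' he' h => hsndinj he he' h)]
  set M0lt := M0.filter (fun e => L e.2 < 1) with hM0lt
  set M0ge := M0.filter (fun e => ¬ L e.2 < 1) with hM0ge
  set Slt := Ssup.filter (fun j => L j < 1) with hSlt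
  set Sge := Ssup.filter (fun j => ¬ L j < 1) with hSge
  have hsplitL : ∑ e ∈ M0, hgOmega (L e.2)
      = ∑ e ∈ M0lt, hgOmega (L e.2) + ∑ e ∈ M0ge, hgOmega (L e.2) :=
    (Finset.sum_filter_add_sum_filter_not _ _ _).symm
  have hsplitR : ∑ j ∈ Ssup, L j * hgOmega (L j)
      = ∑ j ∈ Slt, L j * hgOmega (L j) + ∑ j ∈ Sge, L j * hgOmega (L j) :=
    (Finset.sum_filter_add_sum_filter_not _ _ _).symm
  -- the ≥1 part
  have hge : ∑ e ∈ M0ge, hgOmega (L e.2) ≤ ∑ j ∈ Sge, L j * hgOmega (L j) := by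
    have h1 : ∑ j ∈ Sge, L j * hgOmega (L j) = ∑ j ∈ Sge, hgOmega (L j) := by
      apply Finset.sum_congr rfl
      intro j hj
      rcases Finset.mem_filter.1 hj with ⟨hjS, hjL⟩
      have : L j = 1 := le_antisymm (hL1 j hjS) (not_lt.1 hjL)
      rw [this, one_mul]
    rw [h1]
    have h2 : ∑ e ∈ M0ge, hgOmega (L e.2) = ∑ j ∈ M0ge.image Prod.snd, hgOmega (L j) := by
      rw [Finset.sum_image (fun e he e' he' h =>
        hsndinj (Finset.filter_subset _ _ he) (Finset.filter_subset _ _ he') h)]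
    rw [h2]
    apply Finset.sum_le_sum_of_subset_of_nonneg
    · intro j hj
      obtain ⟨e, he, rfl⟩ := Finset.mem_image.1 hj
      rcases Finset.mem_filter.1 he with ⟨heM, heL⟩
      exact Finset.mem_filter.2 ⟨(hM0.2 e heM).2, heL⟩
    · intro j _ _
      exact hgOmega_nonneg
  -- the <1 (core) part
  have hlt : ∑ e ∈ M0lt, hgOmega (L e.2) ≤ ∑ j ∈ Slt, L j * hgOmega (L j) := by
    set rowval : D → ℝ := fun i => ∑ j' ∈ Slt, xs i j' * hgOmega (L j') with hrow
    have hrow0 : ∀ i, 0 ≤ rowval i := fun i =>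
      Finset.sum_nonneg (fun j' _ => mul_nonneg (hxs.1 i j') hgOmega_nonneg)
    have hRHS : ∑ j ∈ Slt, L j * hgOmega (L j) = ∑ i ∈ D1, rowval i := by
      rw [hrow]
      rw [Finset.sum_comm]
      apply Finset.sum_congr rfl
      intro j _
      rw [hLdef, Finset.sum_mul]
    have hclaimA : ∀ e ∈ M0lt, hgOmega (L e.2) ≤ rowval e.1 := by
      intro e he
      rcases Finset.mem_filter.1 he with ⟨heM, heL⟩
      have hi : e.1 ∈ D1 := (hM0.2 e heM).1
      have hj : e.2 ∈ Ssup := (hM0.2 e heM).2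
      have hij : (e.1, e.2) ∈ Ed := by
        have := hM0.1.1 heM
        simpa using this
      have hrf : ∑ j' ∈ Ssup, xs e.1 j' = 1 :=
        row_full hg_mono hxs hxs_opt hi hj hij heL
      have hzero : ∀ j' ∈ Ssup, j' ∉ Slt → xs e.1 j' = 0 := by
        intro j' hj' hj'n
        by_contra hz
        have hpos : 0 < xs e.1 j' := lt_of_le_of_ne (hxs.1 e.1 j') (Ne.symm hz)
        have hle : L j' ≤ L e.2 :=
          local_balance hg_conv hxs hxs_opt hi hj hj' hij hpos heL
        exact hj'n (Finset.mem_filter.2 ⟨hj', lt_of_le_of_lt hle heL⟩)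
      have hsum1 : ∑ j' ∈ Slt, xs e.1 j' = 1 := by
        rw [← hrf]
        exact Finset.sum_subset (Finset.filter_subset _ _) hzero
      have hge' : ∑ j' ∈ Slt, xs e.1 j' * hgOmega (L e.2)
          ≤ ∑ j' ∈ Slt, xs e.1 j' * hgOmega (L j') := by
        apply Finset.sum_le_sum
        intro j' hj'
        by_cases hz : xs e.1 j' = 0
        · simp [hz]
        · have hpos : 0 < xs e.1 j' := lt_of_le_of_ne (hxs.1 e.1 j') (Ne.symm hz)
          have hle : L j' ≤ L e.2 :=
            local_balance hg_conv hxs hxs_opt hi hj (Finset.mem_filter.1 hj').1 hij hpos heL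
          exact mul_le_mul_of_nonneg_left (hgOmega_antitone (hL0 j') hle) (le_of_lt hpos)
      calc hgOmega (L e.2) = (∑ j' ∈ Slt, xs e.1 j') * hgOmega (L e.2) := by
            rw [hsum1, one_mul]
        _ = ∑ j' ∈ Slt, xs e.1 j' * hgOmega (L e.2) := Finset.sum_mul _ _ _
        _ ≤ ∑ j' ∈ Slt, xs e.1 j' * hgOmega (L j') := hge'
        _ = rowval e.1 := rfl
    have hfstinj : Set.InjOn Prod.fst (M0lt : Set (D × S)) := by
      intro e he e' he' hee'
      by_contra h
      exact ((hM0.1.2 e (Finset.filter_subset _ _ he) e'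
        (Finset.filter_subset _ _ he') h).1) hee'
    have hB : ∑ e ∈ M0lt, rowval e.1 ≤ ∑ i ∈ D1, rowval i := by
      have h1 : ∑ e ∈ M0lt, rowval e.1 = ∑ i ∈ M0lt.image Prod.fst, rowval i :=
        (Finset.sum_image (fun e he e' he' h => hfstinj he he' h)).symm
      rw [h1]
      apply Finset.sum_le_sum_of_subset_of_nonneg
      · intro i hi
        obtain ⟨e, he, rfl⟩ := Finset.mem_image.1 hi
        exact (hM0.2 e (Finset.filter_subset _ _ he)).1
      · intro i _ _
        exact hrow0 i
    calc ∑ e ∈ M0lt, hgOmega (L e.2) ≤ ∑ e ∈ M0lt, rowval e.1 :=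
          Finset.sum_le_sum hclaimA
      _ ≤ ∑ i ∈ D1, rowval i := hB
      _ = ∑ j ∈ Slt, L j * hgOmega (L j) := hRHS.symm
  rw [hstep1, hsplitL, hsplitR]
  exact add_le_add hlt hge

/-- The key factor-revealing inequality `(★★)` for the balanced loads. -/
lemma starStarIneq (hg_mono : StrictMono g) (hg_conv : StrictConvexOn ℝ Set.univ g)
    (hxs : IsFracMatching Ed D1 Ssup xs)
    (hxs_opt : ∀ x, IsFracMatching Ed D1 Ssup x →
      PgObjUnw g D1 Ssup xs ≤ PgObjUnw g D1 Ssup x)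
    {M0 : Finset (D × S)} (hM0 : IsMatchingBtw Ed D1 Ssup M0) :
    ((2 * Real.exp 1 - 1) / (Real.exp 1)^2) * M0.card
      ≤ ∑ j ∈ suppliesOf M0, (∑ i ∈ D1, xs i j)
        + ∑ j ∈ Ssup \ suppliesOf M0, min (∑ i ∈ D1, xs i j) (1 / (Real.exp 1)^2) := by
  classical
  set L : S → ℝ := fun j => ∑ i ∈ D1, xs i j with hLdef
  have hL0 : ∀ j, 0 ≤ L j := fun j => Finset.sum_nonneg (fun i _ => hxs.1 i j)
  have hL1 : ∀ j ∈ Ssup, L j ≤ 1 := fun j hj => hxs.2.2.2 j hj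
  set W := suppliesOf M0 with hW
  have hWsub : W ⊆ Ssup := suppliesOf_subset hM0
  have hWcard : W.card = M0.card := card_suppliesOf hM0.1
  have h1 : ∑ j ∈ W, ((2 * Real.exp 1 - 1) / (Real.exp 1)^2 - L j)
      ≤ ∑ j ∈ W, (1 - L j) * hgOmega (L j) :=
    Finset.sum_le_sum (fun j hj => hgOmega_W_bound (hL0 j) (hL1 j (hWsub hj)))
  have h2 : ∑ j ∈ Ssup \ W, L j * hgOmega (L j) ≤ ∑ j ∈ Ssup \ W, min (L j) (1/(Real.exp 1)^2) :=
    Finset.sum_le_sum (fun j _ => hgOmega_T_bound (hL0 j))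
  have h3 := mass_bound hg_mono hg_conv hxs hxs_opt hM0
  have hsd : ∑ j ∈ Ssup, L j * hgOmega (L j)
      = ∑ j ∈ Ssup \ W, L j * hgOmega (L j) + ∑ j ∈ W, L j * hgOmega (L j) :=
    (Finset.sum_sdiff hWsub).symm
  have hexp : ∑ j ∈ W, (1 - L j) * hgOmega (L j)
      = ∑ j ∈ W, hgOmega (L j) - ∑ j ∈ W, L j * hgOmega (L j) := by
    rw [← Finset.sum_sub_distrib]
    apply Finset.sum_congr rfl
    intro j _
    ring
  have hconst : ∑ j ∈ W, ((2 * Real.exp 1 - 1) / (Real.exp 1)^2 - L j)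
      = ((2 * Real.exp 1 - 1) / (Real.exp 1)^2) * M0.card - ∑ j ∈ W, L j := by
    rw [Finset.sum_sub_distrib, Finset.sum_const, ← hWcard]
    simp [nsmul_eq_mul, mul_comm]
  rw [hconst] at h1
  rw [hW] at *
  linarith [h3, hsd ▸ h3]
end star

section marg
variable {D S : Type*} [DecidableEq D] [DecidableEq S]
variable {Ed : Finset (D × S)} {D1 : Finset D} {Ssup : Finset S}
variable {xs : D → S → ℝ} {μ : Finset (D × S) → ℝ}

/-- Coverage marginal: the probability that `j` is covered equals its load. -/
lemma cov_marginal
    (hμ_supp : ∀ M, μ M ≠ 0 → IsMatchingBtw Ed D1 Ssup M)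
    (hμ_marg : ∀ i ∈ D1, ∀ j ∈ Ssup,
      ∑ M ∈ Ed.powerset.filter (fun M => (i, j) ∈ M), μ M = xs i j)
    {j : S} (hj : j ∈ Ssup) :
    ∑ M ∈ Ed.powerset, μ M * (if j ∈ suppliesOf M then (1:ℝ) else 0)
      = ∑ i ∈ D1, xs i j := by
  classical
  have hper : ∀ M ∈ Ed.powerset, μ M * (if j ∈ suppliesOf M then (1:ℝ) else 0)
      = μ M * ∑ i ∈ D1, (if (i, j) ∈ M then (1:ℝ) else 0) := by
    intro M _
    by_cases hμ0 : μ M = 0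
    · rw [hμ0, zero_mul, zero_mul]
    · have hM := hμ_supp M hμ0
      congr 1
      by_cases hjm : j ∈ suppliesOf M
      · rw [if_pos hjm]
        obtain ⟨e, he, hesnd⟩ := Finset.mem_image.1 hjm
        have hfilter : D1.filter (fun i => (i, j) ∈ M) = {e.1} := by
          apply Finset.Subset.antisymm
          · intro i hi
            rcases Finset.mem_filter.1 hi with ⟨_, hiM⟩
            rw [Finset.mem_singleton]
            by_contra hne
            have hne' : (i, j) ≠ e := by
              intro hc
              exact hne (by rw [← hc])
            have := (hM.1.2 (i, j) hiM e he hne').2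
            simp only at this
            rw [hesnd] at this
            exact this rfl
          · intro x hx
            rw [Finset.mem_singleton] at hx
            subst hx
            have he' : (e.1, j) ∈ M := by
              rw [← hesnd]
              exact he
            exact Finset.mem_filter.2 ⟨(hM.2 e he).1, he'⟩
        rw [Finset.sum_boole, hfilter]
        simp
      · rw [if_neg hjm]
        symm
        apply Finset.sum_eq_zero
        intro i _
        rw [if_neg]
        intro hc
        exact hjm (Finset.mem_image.2 ⟨(i, j), hc, rfl⟩)
  rw [Finset.sum_congr rfl hper]
  have hswap : ∑ M ∈ Ed.powerset, μ M * ∑ i ∈ D1, (if (i, j) ∈ M then (1:ℝ) else 0)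
      = ∑ i ∈ D1, ∑ M ∈ Ed.powerset, μ M * (if (i, j) ∈ M then (1:ℝ) else 0) := by
    calc ∑ M ∈ Ed.powerset, μ M * ∑ i ∈ D1, (if (i, j) ∈ M then (1:ℝ) else 0)
        = ∑ M ∈ Ed.powerset, ∑ i ∈ D1, μ M * (if (i, j) ∈ M then (1:ℝ) else 0) :=
          Finset.sum_congr rfl (fun M _ => Finset.mul_sum _ _ _)
      _ = ∑ i ∈ D1, ∑ M ∈ Ed.powerset, μ M * (if (i, j) ∈ M then (1:ℝ) else 0) :=
          Finset.sum_comm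
  rw [hswap]
  apply Finset.sum_congr rfl
  intro i hi
  rw [← hμ_marg i hi j hj, Finset.sum_filter]
  apply Finset.sum_congr rfl
  intro M _
  by_cases h : (i, j) ∈ M <;> simp [h]

/-- First moment: expected matching size equals total load. -/
lemma first_moment
    (hμ_supp : ∀ M, μ M ≠ 0 → IsMatchingBtw Ed D1 Ssup M)
    (hμ_marg : ∀ i ∈ D1, ∀ j ∈ Ssup,
      ∑ M ∈ Ed.powerset.filter (fun M => (i, j) ∈ M), μ M = xs i j) :
    ∑ M ∈ Ed.powerset, μ M * (M.card : ℝ) = ∑ j ∈ Ssup, ∑ i ∈ D1, xs i j := by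
  classical
  have hper : ∀ M ∈ Ed.powerset, μ M * (M.card : ℝ)
      = μ M * ∑ j ∈ Ssup, (if j ∈ suppliesOf M then (1:ℝ) else 0) := by
    intro M _
    by_cases hμ0 : μ M = 0
    · rw [hμ0, zero_mul, zero_mul]
    · have hM := hμ_supp M hμ0
      congr 1
      rw [Finset.sum_boole]
      have : Ssup.filter (fun j => j ∈ suppliesOf M) = suppliesOf M := by
        apply Finset.Subset.antisymm
        · intro j hj
          exact (Finset.mem_filter.1 hj).2
        · intro j hj
          exact Finset.mem_filter.2 ⟨suppliesOf_subset hM hj, hj⟩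
      rw [this, card_suppliesOf hM.1]
  rw [Finset.sum_congr rfl hper]
  have hswap : ∑ M ∈ Ed.powerset, μ M * ∑ j ∈ Ssup, (if j ∈ suppliesOf M then (1:ℝ) else 0)
      = ∑ j ∈ Ssup, ∑ M ∈ Ed.powerset, μ M * (if j ∈ suppliesOf M then (1:ℝ) else 0) := by
    calc ∑ M ∈ Ed.powerset, μ M * ∑ j ∈ Ssup, (if j ∈ suppliesOf M then (1:ℝ) else 0)
        = ∑ M ∈ Ed.powerset, ∑ j ∈ Ssup, μ M * (if j ∈ suppliesOf M then (1:ℝ) else 0) :=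
          Finset.sum_congr rfl (fun M _ => Finset.mul_sum _ _ _)
      _ = ∑ j ∈ Ssup, ∑ M ∈ Ed.powerset, μ M * (if j ∈ suppliesOf M then (1:ℝ) else 0) :=
          Finset.sum_comm
  rw [hswap]
  exact Finset.sum_congr rfl (fun j hj => cov_marginal hμ_supp hμ_marg hj)

end marg

section expnu
variable {D S : Type*} [DecidableEq D] [DecidableEq S]
variable {Ed : Finset (D × S)} {D2 : Finset D} {π : D → ℝ}

lemma nuMatch_cast_lipschitz (A : Finset D) {T' T : Finset S} (h : T' ⊆ T) :
    (nuMatch Ed A T : ℝ) ≤ (nuMatch Ed A T' : ℝ) + ((T \ T').card : ℝ) := by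
  obtain ⟨N, hN, hNcard⟩ := exists_nuMatch (Ed := Ed) (A := A) (T := T)
  have key := nu_sdiff_ge hN (T \ T')
  have hTT : T \ (T \ T') = T' := by
    ext x
    simp only [mem_sdiff, not_and, not_not]
    constructor
    · rintro ⟨hx1, hx2⟩
      exact hx2 hx1
    · intro hx
      exact ⟨h hx, fun _ => hx⟩
  rw [hTT] at key
  have h2 : ((suppliesOf N ∩ (T \ T')).card : ℤ) ≤ ((T \ T').card : ℤ) := by
    exact_mod_cast Int.ofNat_le.2 (card_le_card inter_subset_right)
  have h3 : (N.card : ℤ) = (nuMatch Ed A T : ℤ) := by exact_mod_cast hNcard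
  have : (nuMatch Ed A T : ℤ) ≤ (nuMatch Ed A T' : ℤ) + ((T \ T').card : ℤ) := by omega
  exact_mod_cast this

lemma expNu_lipschitz (hπ : ∀ i ∈ D2, π i ∈ Set.Icc (0 : ℝ) 1)
    {T' T : Finset S} (h : T' ⊆ T) :
    expNu π D2 Ed T ≤ expNu π D2 Ed T' + ((T \ T').card : ℝ) := by
  unfold expNu
  have hs := sum_probOf (D2 := D2) hπ
  calc ∑ A ∈ D2.powerset, probOf π D2 A * (nuMatch Ed A T : ℝ)
      ≤ ∑ A ∈ D2.powerset, probOf π D2 A * ((nuMatch Ed A T' : ℝ) + ((T \ T').card : ℝ)) := by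
        apply Finset.sum_le_sum
        intro A hA
        exact mul_le_mul_of_nonneg_left (nuMatch_cast_lipschitz A h) (probOf_nonneg hπ hA)
    _ = ∑ A ∈ D2.powerset, probOf π D2 A * (nuMatch Ed A T' : ℝ)
        + (∑ A ∈ D2.powerset, probOf π D2 A) * ((T \ T').card : ℝ) := by
        rw [Finset.sum_mul, ← Finset.sum_add_distrib]
        apply Finset.sum_congr rfl
        intro A _
        ring
    _ = ∑ A ∈ D2.powerset, probOf π D2 A * (nuMatch Ed A T' : ℝ) + ((T \ T').card : ℝ) := by
        rw [hs, one_mul]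

end expnu

/-- **Theorem 3, unweighted case (conditional form from the factor revealing program).**
All supply vertices have unit weight.  `x*` is an optimal solution of `P^g`, `μ` has edge
marginals `x*`, `R` is the independent random subset of `D2` with arrival probabilities `π`,
and `f(T) := E_R[ν(R,T)]`.  If `T̄` is co-maximum-matchable and satisfies the greedy guarantee
`f(T̄) + |S∖T̄| ≥ (1 − 1/e)·f(T) + |S∖T|` for every co-maximum-matchable `T`, then with
`λ = 1/(e−1)`,
`λ·E_{M1∼μ}E_R[|M1| + ν(R, S∖V_S(M1))] + (1−λ)·(|S∖T̄| + f(T̄))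
  ≥ (1 − 1/e + 1/e²)·max_{M1} (|M1| + E_R[ν(R, S∖V_S(M1))])`. -/
theorem hedge_and_greed_unweighted_competitive
    {D S : Type*} [DecidableEq D] [DecidableEq S]
    (D1 D2 : Finset D) (Ssup : Finset S) (Ed : Finset (D × S))
    (hdisj : Disjoint D1 D2)
    (hE : ∀ e ∈ Ed, e.1 ∈ D1 ∪ D2 ∧ e.2 ∈ Ssup)
    (g : ℝ → ℝ)
    (hg_diff : Differentiable ℝ g)
    (hg_mono : StrictMono g)
    (hg_conv : StrictConvexOn ℝ Set.univ g)
    (xs : D → S → ℝ)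
    (hxs : IsFracMatching Ed D1 Ssup xs)
    (hxs_opt : ∀ x, IsFracMatching Ed D1 Ssup x →
      PgObjUnw g D1 Ssup xs ≤ PgObjUnw g D1 Ssup x)
    (μ : Finset (D × S) → ℝ)
    (hμ_nonneg : ∀ M, 0 ≤ μ M)
    (hμ_supp : ∀ M, μ M ≠ 0 → IsMatchingBtw Ed D1 Ssup M)
    (hμ_total : ∑ M ∈ Ed.powerset, μ M = 1)
    (hμ_marg : ∀ i ∈ D1, ∀ j ∈ Ssup,
      ∑ M ∈ Ed.powerset.filter (fun M => (i, j) ∈ M), μ M = xs i j)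
    (π : D → ℝ) (hπ : ∀ i ∈ D2, π i ∈ Set.Icc (0 : ℝ) 1)
    (Tbar : Finset S) (hTbar_sub : Tbar ⊆ Ssup)
    (hTbar_comm : (∃ M, IsMatchingBtw Ed D1 Ssup M ∧ Ssup \ Tbar ⊆ suppliesOf M) ∧
      (Ssup \ Tbar).card = nuMatch Ed D1 Ssup)
    (hTbar_greedy : ∀ T : Finset S, T ⊆ Ssup →
      ((∃ M, IsMatchingBtw Ed D1 Ssup M ∧ Ssup \ T ⊆ suppliesOf M) ∧
        (Ssup \ T).card = nuMatch Ed D1 Ssup) →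
      expNu π D2 Ed Tbar + ((Ssup \ Tbar).card : ℝ) ≥
        (1 - 1 / Real.exp 1) * expNu π D2 Ed T + ((Ssup \ T).card : ℝ)) :
    (1 / (Real.exp 1 - 1)) *
        (∑ M ∈ Ed.powerset, μ M * ∑ A ∈ D2.powerset, probOf π D2 A *
          ((M.card : ℝ) + (nuMatch Ed A (Ssup \ suppliesOf M) : ℝ))) +
      (1 - 1 / (Real.exp 1 - 1)) *
        (((Ssup \ Tbar).card : ℝ) + expNu π D2 Ed Tbar) ≥
    (1 - 1 / Real.exp 1 + 1 / Real.exp 1 ^ 2) *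
      sSup {r : ℝ | ∃ M, IsMatchingBtw Ed D1 Ssup M ∧
        r = (M.card : ℝ) + expNu π D2 Ed (Ssup \ suppliesOf M)} := by

  classical
  have he7 : (2.7 : ℝ) < Real.exp 1 := exp_one_gt
  have he72 : Real.exp 1 < 2.72 := exp_one_lt
  set E : ℝ := Real.exp 1 with hEdef
  have hE1 : (1:ℝ) < E := by linarith
  have hE0 : (0:ℝ) < E := by linarith
  set lam : ℝ := 1 / (E - 1) with hlamdef
  set c : ℝ := 1 - 1 / E + 1 / E ^ 2 with hcdef
  have hlam0 : 0 < lam := by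
    rw [hlamdef]
    apply div_pos one_pos
    linarith
  have hlam1 : lam < 1 := by
    rw [hlamdef, div_lt_one (by linarith)]
    linarith
  have hc0 : 0 < c := by
    rw [hcdef]
    have h1 : 1 / E < 1 := by rw [div_lt_one hE0]; linarith
    have h2 : 0 < 1 / E ^ 2 := by positivity
    linarith
  set μterm : ℝ := ∑ M ∈ Ed.powerset, μ M * ∑ A ∈ D2.powerset, probOf π D2 A *
      ((M.card : ℝ) + (nuMatch Ed A (Ssup \ suppliesOf M) : ℝ)) with hμtermdef
  set Bterm : ℝ := ((Ssup \ Tbar).card : ℝ) + expNu π D2 Ed Tbar with hBtermdef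
  have hμterm0 : 0 ≤ μterm := by
    rw [hμtermdef]
    apply Finset.sum_nonneg
    intro M _
    apply mul_nonneg (hμ_nonneg M)
    apply Finset.sum_nonneg
    intro A hA
    exact mul_nonneg (probOf_nonneg hπ hA) (by positivity)
  have hBterm0 : 0 ≤ Bterm := by
    rw [hBtermdef]
    have := expNu_nonneg (S := S) hπ Ed Tbar
    have h2 : (0:ℝ) ≤ ((Ssup \ Tbar).card : ℝ) := Nat.cast_nonneg _
    linarith
  clear_value E lam c μterm Bterm
  -- the main per-benchmark inequality
  have hmain : ∀ Mst : Finset (D × S), IsMatchingBtw Ed D1 Ssup Mst →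
      c * ((Mst.card : ℝ) + expNu π D2 Ed (Ssup \ suppliesOf Mst))
        ≤ lam * μterm + (1 - lam) * Bterm := by
    intro Mst hMst
    have hL0 : ∀ j : S, 0 ≤ ∑ i ∈ D1, xs i j :=
      fun j => Finset.sum_nonneg (fun i _ => hxs.1 i j)
    have hL1 : ∀ j ∈ Ssup, ∑ i ∈ D1, xs i j ≤ 1 := fun j hj => hxs.2.2.2 j hj
    have hWm : MatchableSet Ed D1 Ssup (suppliesOf Mst) := ⟨Mst, hMst, rfl⟩
    have hWsub : suppliesOf Mst ⊆ Ssup := suppliesOf_subset hMst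
    have hWcard : (suppliesOf Mst).card = Mst.card := card_suppliesOf hMst.1
    have hkν : Mst.card ≤ nuMatch Ed D1 Ssup := le_nuMatch hMst
    have hkνR : (Mst.card : ℝ) ≤ (nuMatch Ed D1 Ssup : ℝ) := by exact_mod_cast hkν
    obtain ⟨Mmax, hMmax, hMmaxcard⟩ := exists_nuMatch (Ed := Ed) (A := D1) (T := Ssup)
    have hBm : MatchableSet Ed D1 Ssup (suppliesOf Mmax) := ⟨Mmax, hMmax, rfl⟩
    have hBcard : (suppliesOf Mmax).card = nuMatch Ed D1 Ssup := by
      rw [card_suppliesOf hMmax.1]; exact hMmaxcard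
    obtain ⟨W', hWW', hW'card, hW'm⟩ := matchable_extend
      (nuMatch Ed D1 Ssup - (suppliesOf Mst).card)
      (suppliesOf Mst) hWm (suppliesOf Mmax) hBm (by rw [hBcard])
      (by rw [hBcard, hWcard]; exact hkν)
    rw [hBcard] at hW'card
    have hW'sub : W' ⊆ Ssup := matchable_subset hW'm
    obtain ⟨Mhat, hMhat, hMhatsup⟩ := hW'm
    -- greedy applied to the co-maximum-matchable set `Ssup \ W'`
    have hselfW' : Ssup \ (Ssup \ W') = W' := Finset.sdiff_sdiff_eq_self hW'sub
    have hgr := hTbar_greedy (Ssup \ W') sdiff_subset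
      ⟨⟨Mhat, hMhat, by rw [hselfW', hMhatsup]⟩, by rw [hselfW']; exact hW'card⟩
    have hνbar : ((Ssup \ Tbar).card : ℝ) = (nuMatch Ed D1 Ssup : ℝ) := by
      exact_mod_cast hTbar_comm.2
    have hνhat : ((Ssup \ (Ssup \ W')).card : ℝ) = (nuMatch Ed D1 Ssup : ℝ) := by
      rw [hselfW']; exact_mod_cast hW'card
    have hfhat0 : 0 ≤ expNu π D2 Ed (Ssup \ W') := expNu_nonneg hπ Ed _
    have hfbar : (1 - 1 / E) * expNu π D2 Ed (Ssup \ W') ≤ expNu π D2 Ed Tbar := by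
      rw [hνbar, hνhat] at hgr
      linarith
    -- Lipschitz step
    have hThatsub : Ssup \ W' ⊆ Ssup \ suppliesOf Mst := by
      intro x hx
      rcases mem_sdiff.1 hx with ⟨h1, h2⟩
      exact mem_sdiff.2 ⟨h1, fun hc => h2 (hWW' hc)⟩
    have hTdiff : (Ssup \ suppliesOf Mst) \ (Ssup \ W') = W' \ suppliesOf Mst := by
      ext x
      simp only [mem_sdiff, not_and, not_not]
      constructor
      · rintro ⟨⟨hx1, hx2⟩, hx3⟩
        exact ⟨hx3 hx1, hx2⟩
      · rintro ⟨hx1, hx2⟩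
        exact ⟨⟨hW'sub hx1, hx2⟩, fun _ => hx1⟩
    have hTdiffcard : (((Ssup \ suppliesOf Mst) \ (Ssup \ W')).card : ℝ)
        = (nuMatch Ed D1 Ssup : ℝ) - (Mst.card : ℝ) := by
      have h1 : (W' \ suppliesOf Mst).card = nuMatch Ed D1 Ssup - Mst.card := by
        rw [card_sdiff_of_subset hWW', hW'card, hWcard]
      rw [hTdiff, h1, Nat.cast_sub hkν]
    have hlip : expNu π D2 Ed (Ssup \ suppliesOf Mst)
        ≤ expNu π D2 Ed (Ssup \ W')
          + ((nuMatch Ed D1 Ssup : ℝ) - (Mst.card : ℝ)) := by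
      have := expNu_lipschitz (Ed := Ed) hπ hThatsub
      rw [hTdiffcard] at this
      exact this
    -- per-scenario maximum matchings inside `Ssup \ suppliesOf Mst`
    have hNAex : ∀ A : Finset D, ∃ N, IsMatchingBtw Ed A (Ssup \ suppliesOf Mst) N ∧
        N.card = nuMatch Ed A (Ssup \ suppliesOf Mst) := fun A => exists_nuMatch
    choose NA hNA1 hNA2 using hNAex
    set dd : S → ℝ := fun j => ∑ A ∈ D2.powerset, probOf π D2 A *
        (if j ∈ suppliesOf (NA A) then (1 : ℝ) else 0) with hdddef
    have hd0 : ∀ j, 0 ≤ dd j := fun j => Finset.sum_nonneg fun A hA =>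
      mul_nonneg (probOf_nonneg hπ hA) (by positivity)
    have hd1 : ∀ j, dd j ≤ 1 := by
      intro j
      rw [hdddef]
      calc ∑ A ∈ D2.powerset, probOf π D2 A * (if j ∈ suppliesOf (NA A) then (1:ℝ) else 0)
          ≤ ∑ A ∈ D2.powerset, probOf π D2 A := by
            apply Finset.sum_le_sum
            intro A hA
            have hp := probOf_nonneg hπ hA
            split
            · rw [mul_one]
            · rw [mul_zero]; exact hp
        _ = 1 := sum_probOf hπ
    have hsupNA : ∀ A, suppliesOf (NA A) ⊆ Ssup \ suppliesOf Mst :=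
      fun A => suppliesOf_subset (hNA1 A)
    have hcardNA : ∀ A, ((suppliesOf (NA A)).card : ℝ)
        = (nuMatch Ed A (Ssup \ suppliesOf Mst) : ℝ) := by
      intro A
      rw [card_suppliesOf (hNA1 A).1, hNA2 A]
    have hindsum : ∀ (X : Finset S), X ⊆ Ssup \ suppliesOf Mst → ∀ (f : S → ℝ),
        ∑ j ∈ X, f j
          = ∑ j ∈ Ssup \ suppliesOf Mst, (if j ∈ X then (1:ℝ) else 0) * f j := by
      intro X hX f
      have h1 : ∑ j ∈ X, f j = ∑ j ∈ X, (if j ∈ X then (1:ℝ) else 0) * f j := by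
        apply Finset.sum_congr rfl
        intro j hj
        rw [if_pos hj, one_mul]
      rw [h1]
      exact Finset.sum_subset hX (fun j _ hj => by rw [if_neg hj, zero_mul])
    have hdsum : ∑ j ∈ Ssup \ suppliesOf Mst, dd j
        = expNu π D2 Ed (Ssup \ suppliesOf Mst) := by
      rw [hdddef]
      rw [Finset.sum_comm]
      unfold expNu
      apply Finset.sum_congr rfl
      intro A _
      rw [← Finset.mul_sum]
      congr 1
      have h := hindsum (suppliesOf (NA A)) (hsupNA A) (fun _ => (1:ℝ))
      simp only [mul_one] at h
      have h2 : ∑ _j ∈ suppliesOf (NA A), (1:ℝ) = ((suppliesOf (NA A)).card : ℝ) := by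
        simp
      rw [← h, h2, hcardNA A]
    have hcov : ∀ j ∈ Ssup,
        ∑ M ∈ Ed.powerset, μ M * (if j ∈ suppliesOf M then (1:ℝ) else 0)
          = ∑ i ∈ D1, xs i j :=
      fun j hj => cov_marginal hμ_supp hμ_marg hj
    have hfm : ∑ M ∈ Ed.powerset, μ M * (M.card : ℝ) = ∑ j ∈ Ssup, ∑ i ∈ D1, xs i j :=
      first_moment hμ_supp hμ_marg
    -- lower bound for the hedging term
    have hμbound : ∑ j ∈ Ssup, (∑ i ∈ D1, xs i j)
        + expNu π D2 Ed (Ssup \ suppliesOf Mst)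
        - ∑ j ∈ Ssup \ suppliesOf Mst, (∑ i ∈ D1, xs i j) * dd j ≤ μterm := by
      have hsplit : μterm = (∑ M ∈ Ed.powerset, μ M * (M.card : ℝ))
          + ∑ M ∈ Ed.powerset, μ M *
            (∑ A ∈ D2.powerset, probOf π D2 A
              * (nuMatch Ed A (Ssup \ suppliesOf M) : ℝ)) := by
        rw [hμtermdef, ← Finset.sum_add_distrib]
        apply Finset.sum_congr rfl
        intro M _
        rw [← mul_add]
        congr 1
        have hexp : ∑ A ∈ D2.powerset, probOf π D2 A *
            ((M.card : ℝ) + (nuMatch Ed A (Ssup \ suppliesOf M) : ℝ))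
            = (∑ A ∈ D2.powerset, probOf π D2 A) * (M.card : ℝ)
              + ∑ A ∈ D2.powerset, probOf π D2 A
                * (nuMatch Ed A (Ssup \ suppliesOf M) : ℝ) := by
          rw [Finset.sum_mul, ← Finset.sum_add_distrib]
          apply Finset.sum_congr rfl
          intro A _
          ring
        rw [hexp, sum_probOf hπ, one_mul]
      have hAA : ∀ M ∈ Ed.powerset, ∀ A ∈ D2.powerset,
          (nuMatch Ed A (Ssup \ suppliesOf Mst) : ℝ)
            - ((suppliesOf (NA A) ∩ suppliesOf M).card : ℝ)
            ≤ (nuMatch Ed A (Ssup \ suppliesOf M) : ℝ) := by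
        intro M _ A _
        have h1 := nu_sdiff_ge (hNA1 A) (suppliesOf M)
        have h2 : nuMatch Ed A ((Ssup \ suppliesOf Mst) \ suppliesOf M)
            ≤ nuMatch Ed A (Ssup \ suppliesOf M) := by
          apply nuMatch_mono
          intro x hx
          rcases mem_sdiff.1 hx with ⟨hx1, hx2⟩
          exact mem_sdiff.2 ⟨(mem_sdiff.1 hx1).1, hx2⟩
        have h4 : ((NA A).card : ℤ) = (nuMatch Ed A (Ssup \ suppliesOf Mst) : ℤ) := by
          exact_mod_cast hNA2 A
        rw [h4] at h1
        have h5 : (nuMatch Ed A ((Ssup \ suppliesOf Mst) \ suppliesOf M) : ℤ)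
            ≤ (nuMatch Ed A (Ssup \ suppliesOf M) : ℤ) := by exact_mod_cast h2
        have h6 : (nuMatch Ed A (Ssup \ suppliesOf Mst) : ℤ)
            - ((suppliesOf (NA A) ∩ suppliesOf M).card : ℤ)
            ≤ (nuMatch Ed A (Ssup \ suppliesOf M) : ℤ) := le_trans h1 h5
        exact_mod_cast h6
      have hperM : ∀ M ∈ Ed.powerset,
          μ M * (expNu π D2 Ed (Ssup \ suppliesOf Mst)
            - ∑ A ∈ D2.powerset, probOf π D2 A
              * ((suppliesOf (NA A) ∩ suppliesOf M).card : ℝ))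
          ≤ μ M * (∑ A ∈ D2.powerset, probOf π D2 A
              * (nuMatch Ed A (Ssup \ suppliesOf M) : ℝ)) := by
        intro M hM
        apply mul_le_mul_of_nonneg_left _ (hμ_nonneg M)
        unfold expNu
        rw [← Finset.sum_sub_distrib]
        apply Finset.sum_le_sum
        intro A hA
        rw [← mul_sub]
        exact mul_le_mul_of_nonneg_left (hAA M hM A hA) (probOf_nonneg hπ hA)
      have hcardind : ∀ (X Y : Finset S), ((X ∩ Y).card : ℝ)
          = ∑ j ∈ X, (if j ∈ Y then (1:ℝ) else 0) := by
        intro X Y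
        have hfe : X.filter (fun j => j ∈ Y) = X ∩ Y := by
          ext x
          simp only [mem_filter, mem_inter]
        rw [Finset.sum_boole, hfe]
      have hloss : ∑ M ∈ Ed.powerset, μ M *
          (∑ A ∈ D2.powerset, probOf π D2 A
            * ((suppliesOf (NA A) ∩ suppliesOf M).card : ℝ))
          = ∑ j ∈ Ssup \ suppliesOf Mst, (∑ i ∈ D1, xs i j) * dd j := by
        have step1 : ∑ M ∈ Ed.powerset, μ M *
            (∑ A ∈ D2.powerset, probOf π D2 A
              * ((suppliesOf (NA A) ∩ suppliesOf M).card : ℝ))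
            = ∑ A ∈ D2.powerset, probOf π D2 A *
              (∑ M ∈ Ed.powerset, μ M * ((suppliesOf (NA A) ∩ suppliesOf M).card : ℝ)) := by
          calc ∑ M ∈ Ed.powerset, μ M *
              (∑ A ∈ D2.powerset, probOf π D2 A
                * ((suppliesOf (NA A) ∩ suppliesOf M).card : ℝ))
              = ∑ M ∈ Ed.powerset, ∑ A ∈ D2.powerset,
                probOf π D2 A * (μ M * ((suppliesOf (NA A) ∩ suppliesOf M).card : ℝ)) := by
                apply Finset.sum_congr rfl
                intro M _
                rw [Finset.mul_sum]
                apply Finset.sum_congr rfl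
                intro A _
                ring
            _ = ∑ A ∈ D2.powerset, ∑ M ∈ Ed.powerset,
                probOf π D2 A * (μ M * ((suppliesOf (NA A) ∩ suppliesOf M).card : ℝ)) :=
                Finset.sum_comm
            _ = ∑ A ∈ D2.powerset, probOf π D2 A *
                (∑ M ∈ Ed.powerset, μ M * ((suppliesOf (NA A) ∩ suppliesOf M).card : ℝ)) := by
                apply Finset.sum_congr rfl
                intro A _
                rw [Finset.mul_sum]
        have step2 : ∀ A : Finset D,
            ∑ M ∈ Ed.powerset, μ M * ((suppliesOf (NA A) ∩ suppliesOf M).card : ℝ)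
            = ∑ j ∈ suppliesOf (NA A), (∑ i ∈ D1, xs i j) := by
          intro A
          calc ∑ M ∈ Ed.powerset, μ M * ((suppliesOf (NA A) ∩ suppliesOf M).card : ℝ)
              = ∑ M ∈ Ed.powerset, ∑ j ∈ suppliesOf (NA A),
                μ M * (if j ∈ suppliesOf M then (1:ℝ) else 0) := by
                apply Finset.sum_congr rfl
                intro M _
                rw [hcardind, Finset.mul_sum]
            _ = ∑ j ∈ suppliesOf (NA A), ∑ M ∈ Ed.powerset,
                μ M * (if j ∈ suppliesOf M then (1:ℝ) else 0) := Finset.sum_comm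
            _ = ∑ j ∈ suppliesOf (NA A), (∑ i ∈ D1, xs i j) := by
                apply Finset.sum_congr rfl
                intro j hj
                exact hcov j (mem_sdiff.1 (hsupNA A hj)).1
        calc ∑ M ∈ Ed.powerset, μ M *
            (∑ A ∈ D2.powerset, probOf π D2 A
              * ((suppliesOf (NA A) ∩ suppliesOf M).card : ℝ))
            = ∑ A ∈ D2.powerset, probOf π D2 A *
              (∑ j ∈ suppliesOf (NA A), (∑ i ∈ D1, xs i j)) := by
              rw [step1]
              exact Finset.sum_congr rfl (fun A _ => by rw [step2 A])
          _ = ∑ A ∈ D2.powerset, probOf π D2 A *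
              (∑ j ∈ Ssup \ suppliesOf Mst,
                (if j ∈ suppliesOf (NA A) then (1:ℝ) else 0) * (∑ i ∈ D1, xs i j)) := by
              apply Finset.sum_congr rfl
              intro A _
              rw [← hindsum (suppliesOf (NA A)) (hsupNA A)]
          _ = ∑ j ∈ Ssup \ suppliesOf Mst, (∑ i ∈ D1, xs i j) * dd j := by
              rw [hdddef]
              calc ∑ A ∈ D2.powerset, probOf π D2 A *
                  (∑ j ∈ Ssup \ suppliesOf Mst,
                    (if j ∈ suppliesOf (NA A) then (1:ℝ) else 0) * (∑ i ∈ D1, xs i j))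
                  = ∑ A ∈ D2.powerset, ∑ j ∈ Ssup \ suppliesOf Mst,
                    (∑ i ∈ D1, xs i j) * (probOf π D2 A
                      * (if j ∈ suppliesOf (NA A) then (1:ℝ) else 0)) := by
                    apply Finset.sum_congr rfl
                    intro A _
                    rw [Finset.mul_sum]
                    apply Finset.sum_congr rfl
                    intro j _
                    ring
                _ = ∑ j ∈ Ssup \ suppliesOf Mst, ∑ A ∈ D2.powerset,
                    (∑ i ∈ D1, xs i j) * (probOf π D2 A
                      * (if j ∈ suppliesOf (NA A) then (1:ℝ) else 0)) := Finset.sum_comm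
                _ = ∑ j ∈ Ssup \ suppliesOf Mst, (∑ i ∈ D1, xs i j)
                    * (∑ A ∈ D2.powerset, probOf π D2 A
                      * (if j ∈ suppliesOf (NA A) then (1:ℝ) else 0)) := by
                    apply Finset.sum_congr rfl
                    intro j _
                    rw [Finset.mul_sum]
      -- combine
      have hsum2 : ∑ M ∈ Ed.powerset,
          μ M * (expNu π D2 Ed (Ssup \ suppliesOf Mst)
            - ∑ A ∈ D2.powerset, probOf π D2 A
              * ((suppliesOf (NA A) ∩ suppliesOf M).card : ℝ))
          = expNu π D2 Ed (Ssup \ suppliesOf Mst)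
            - ∑ j ∈ Ssup \ suppliesOf Mst, (∑ i ∈ D1, xs i j) * dd j := by
        have : ∑ M ∈ Ed.powerset,
            μ M * (expNu π D2 Ed (Ssup \ suppliesOf Mst)
              - ∑ A ∈ D2.powerset, probOf π D2 A
                * ((suppliesOf (NA A) ∩ suppliesOf M).card : ℝ))
            = (∑ M ∈ Ed.powerset, μ M) * expNu π D2 Ed (Ssup \ suppliesOf Mst)
              - ∑ M ∈ Ed.powerset, μ M *
                (∑ A ∈ D2.powerset, probOf π D2 A
                  * ((suppliesOf (NA A) ∩ suppliesOf M).card : ℝ)) := by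
          rw [Finset.sum_mul, ← Finset.sum_sub_distrib]
          apply Finset.sum_congr rfl
          intro M _
          ring
        rw [this, hμ_total, one_mul, hloss]
      have hsum3 := Finset.sum_le_sum hperM
      rw [hsum2] at hsum3
      linarith [hsplit, hfm, hsum3]
    -- star-star inequalities
    have hstar1 := starStarIneq hg_mono hg_conv hxs hxs_opt hMst
    rw [← hEdef] at hstar1
    have hstar2 := starStarIneq hg_mono hg_conv hxs hxs_opt hMhat
    rw [← hEdef] at hstar2
    have hMhatcard : (Mhat.card : ℝ) = (nuMatch Ed D1 Ssup : ℝ) := by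
      have h := card_suppliesOf hMhat.1
      rw [hMhatsup, hW'card] at h
      exact_mod_cast h.symm
    have hSL : ((2 * E - 1) / E ^ 2) * (nuMatch Ed D1 Ssup : ℝ)
        ≤ ∑ j ∈ Ssup, (∑ i ∈ D1, xs i j) := by
      have h2a : ∑ j ∈ Ssup \ suppliesOf Mhat, min (∑ i ∈ D1, xs i j) (1 / E ^ 2)
          ≤ ∑ j ∈ Ssup \ suppliesOf Mhat, (∑ i ∈ D1, xs i j) :=
        Finset.sum_le_sum (fun j _ => min_le_left _ _)
      have h2b : ∑ j ∈ Ssup \ suppliesOf Mhat, (∑ i ∈ D1, xs i j)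
          + ∑ j ∈ suppliesOf Mhat, (∑ i ∈ D1, xs i j)
          = ∑ j ∈ Ssup, (∑ i ∈ D1, xs i j) :=
        Finset.sum_sdiff (suppliesOf_subset hMhat)
      rw [← hMhatcard]
      linarith [hstar1, hstar2]
    -- pointwise min inequality, summed
    have hminsum : ∑ j ∈ Ssup \ suppliesOf Mst, min (∑ i ∈ D1, xs i j) (1 / E ^ 2)
        ≤ ∑ j ∈ Ssup \ suppliesOf Mst, (∑ i ∈ D1, xs i j)
          - ∑ j ∈ Ssup \ suppliesOf Mst, (∑ i ∈ D1, xs i j) * dd j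
          + expNu π D2 Ed (Ssup \ suppliesOf Mst) * (1 / E ^ 2) := by
      have hper : ∀ j ∈ Ssup \ suppliesOf Mst,
          min (∑ i ∈ D1, xs i j) (1 / E ^ 2)
          ≤ (∑ i ∈ D1, xs i j) - (∑ i ∈ D1, xs i j) * dd j + dd j * (1 / E ^ 2) := by
        intro j _
        rcases le_total (∑ i ∈ D1, xs i j) (1 / E ^ 2) with h | h
        · rw [min_eq_left h]
          nlinarith [mul_nonneg (hd0 j) (sub_nonneg.2 h)]
        · rw [min_eq_right h]
          nlinarith [mul_nonneg (sub_nonneg.2 (hd1 j)) (sub_nonneg.2 h)]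
      calc ∑ j ∈ Ssup \ suppliesOf Mst, min (∑ i ∈ D1, xs i j) (1 / E ^ 2)
          ≤ ∑ j ∈ Ssup \ suppliesOf Mst,
            ((∑ i ∈ D1, xs i j) - (∑ i ∈ D1, xs i j) * dd j + dd j * (1 / E ^ 2)) :=
            Finset.sum_le_sum hper
        _ = ∑ j ∈ Ssup \ suppliesOf Mst, (∑ i ∈ D1, xs i j)
            - ∑ j ∈ Ssup \ suppliesOf Mst, (∑ i ∈ D1, xs i j) * dd j
            + (∑ j ∈ Ssup \ suppliesOf Mst, dd j) * (1 / E ^ 2) := by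
            rw [Finset.sum_add_distrib, Finset.sum_sub_distrib, Finset.sum_mul]
        _ = ∑ j ∈ Ssup \ suppliesOf Mst, (∑ i ∈ D1, xs i j)
            - ∑ j ∈ Ssup \ suppliesOf Mst, (∑ i ∈ D1, xs i j) * dd j
            + expNu π D2 Ed (Ssup \ suppliesOf Mst) * (1 / E ^ 2) := by
            rw [hdsum]
    have hDD1 : ∑ j ∈ Ssup \ suppliesOf Mst, (∑ i ∈ D1, xs i j) * dd j
        ≤ expNu π D2 Ed (Ssup \ suppliesOf Mst) := by
      rw [← hdsum]
      apply Finset.sum_le_sum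
      intro j hj
      have hjS : j ∈ Ssup := (mem_sdiff.1 hj).1
      exact mul_le_of_le_one_left (hd0 j) (hL1 j hjS)
    have hfT0 : 0 ≤ expNu π D2 Ed (Ssup \ suppliesOf Mst) := expNu_nonneg hπ Ed _
    have hfB0 : 0 ≤ expNu π D2 Ed Tbar := expNu_nonneg hπ Ed _
    have hSLsplit : ∑ j ∈ Ssup \ suppliesOf Mst, (∑ i ∈ D1, xs i j)
        + ∑ j ∈ suppliesOf Mst, (∑ i ∈ D1, xs i j)
        = ∑ j ∈ Ssup, (∑ i ∈ D1, xs i j) := Finset.sum_sdiff hWsub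
    -- identities in E
    have hEne : E ≠ 0 := ne_of_gt hE0
    have hEne1 : E - 1 ≠ 0 := by intro h; rw [sub_eq_zero] at h; linarith
    have hid1 : lam * ((2 * E - 1) / E ^ 2) + (1 - lam) = c := by
      rw [hlamdef, hcdef]
      field_simp
      ring
    have hBtermν : Bterm = (nuMatch Ed D1 Ssup : ℝ) + expNu π D2 Ed Tbar := by
      rw [hBtermdef, hνbar]
    rw [hBtermν]
    by_cases hcase : (nuMatch Ed D1 Ssup : ℝ) - (Mst.card : ℝ)
        ≤ expNu π D2 Ed (Ssup \ suppliesOf Mst)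
    · -- case `f* ≥ δ`
      have hμ2 : ((2 * E - 1) / E ^ 2) * (Mst.card : ℝ)
          + expNu π D2 Ed (Ssup \ suppliesOf Mst)
          - expNu π D2 Ed (Ssup \ suppliesOf Mst) * (1 / E ^ 2) ≤ μterm := by
        linarith [hμbound, hminsum, hSLsplit, hstar1]
      have hb2 : (1 - 1 / E) * (expNu π D2 Ed (Ssup \ suppliesOf Mst)
          - ((nuMatch Ed D1 Ssup : ℝ) - (Mst.card : ℝ))) ≤ expNu π D2 Ed Tbar := by
        have h1 : expNu π D2 Ed (Ssup \ suppliesOf Mst)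
            - ((nuMatch Ed D1 Ssup : ℝ) - (Mst.card : ℝ)) ≤ expNu π D2 Ed (Ssup \ W') := by
          linarith [hlip]
        have h2 : (0:ℝ) ≤ 1 - 1 / E := by
          have : 1 / E < 1 := by rw [div_lt_one hE0]; linarith
          linarith
        calc (1 - 1 / E) * (expNu π D2 Ed (Ssup \ suppliesOf Mst)
            - ((nuMatch Ed D1 Ssup : ℝ) - (Mst.card : ℝ)))
            ≤ (1 - 1 / E) * expNu π D2 Ed (Ssup \ W') := mul_le_mul_of_nonneg_left h1 h2
          _ ≤ expNu π D2 Ed Tbar := hfbar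
      have hid2 : lam * (((2 * E - 1) / E ^ 2) * (Mst.card : ℝ)
            + expNu π D2 Ed (Ssup \ suppliesOf Mst)
            - expNu π D2 Ed (Ssup \ suppliesOf Mst) * (1 / E ^ 2))
          + (1 - lam) * (nuMatch Ed D1 Ssup : ℝ)
          + (1 - lam) * ((1 - 1 / E) * (expNu π D2 Ed (Ssup \ suppliesOf Mst)
            - ((nuMatch Ed D1 Ssup : ℝ) - (Mst.card : ℝ))))
          - c * ((Mst.card : ℝ) + expNu π D2 Ed (Ssup \ suppliesOf Mst))
          = (1 - lam) * (1 / E)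
            * ((nuMatch Ed D1 Ssup : ℝ) - (Mst.card : ℝ)) := by
        rw [hlamdef, hcdef]
        field_simp
        ring
      have hm1 : lam * (((2 * E - 1) / E ^ 2) * (Mst.card : ℝ)
          + expNu π D2 Ed (Ssup \ suppliesOf Mst)
          - expNu π D2 Ed (Ssup \ suppliesOf Mst) * (1 / E ^ 2)) ≤ lam * μterm :=
        mul_le_mul_of_nonneg_left hμ2 (le_of_lt hlam0)
      have hm2 : (1 - lam) * ((1 - 1 / E) * (expNu π D2 Ed (Ssup \ suppliesOf Mst)
          - ((nuMatch Ed D1 Ssup : ℝ) - (Mst.card : ℝ))))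
          ≤ (1 - lam) * expNu π D2 Ed Tbar :=
        mul_le_mul_of_nonneg_left hb2 (by linarith)
      have hδ0 : 0 ≤ (1 - lam) * (1 / E)
          * ((nuMatch Ed D1 Ssup : ℝ) - (Mst.card : ℝ)) := by
        apply mul_nonneg (mul_nonneg (by linarith) (by positivity))
        linarith
      have hexpand : (1 - lam) * ((nuMatch Ed D1 Ssup : ℝ) + expNu π D2 Ed Tbar)
          = (1 - lam) * (nuMatch Ed D1 Ssup : ℝ) + (1 - lam) * expNu π D2 Ed Tbar := by
        ring
      linarith [hm1, hm2, hδ0, hid2, hexpand]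
    · -- case `f* < δ`
      push_neg at hcase
      have hμ3 : ((2 * E - 1) / E ^ 2) * (nuMatch Ed D1 Ssup : ℝ) ≤ μterm := by
        linarith [hμbound, hDD1, hSL]
      have hm1 : lam * (((2 * E - 1) / E ^ 2) * (nuMatch Ed D1 Ssup : ℝ)) ≤ lam * μterm :=
        mul_le_mul_of_nonneg_left hμ3 (le_of_lt hlam0)
      have hstep : c * ((Mst.card : ℝ) + expNu π D2 Ed (Ssup \ suppliesOf Mst))
          ≤ c * (nuMatch Ed D1 Ssup : ℝ) := by
        apply mul_le_mul_of_nonneg_left _ (le_of_lt hc0)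
        linarith
      have hcν : c * (nuMatch Ed D1 Ssup : ℝ)
          = lam * (((2 * E - 1) / E ^ 2) * (nuMatch Ed D1 Ssup : ℝ))
            + (1 - lam) * (nuMatch Ed D1 Ssup : ℝ) := by
        rw [← hid1]
        ring
      have hexpand : (1 - lam) * ((nuMatch Ed D1 Ssup : ℝ) + expNu π D2 Ed Tbar)
          = (1 - lam) * (nuMatch Ed D1 Ssup : ℝ) + (1 - lam) * expNu π D2 Ed Tbar := by
        ring
      have hfBnn : 0 ≤ (1 - lam) * expNu π D2 Ed Tbar :=
        mul_nonneg (by linarith) hfB0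
      linarith [hm1, hstep, hcν, hexpand, hfBnn]

  -- wrap up via sSup
  have hsup : sSup {r : ℝ | ∃ M, IsMatchingBtw Ed D1 Ssup M ∧
      r = (M.card : ℝ) + expNu π D2 Ed (Ssup \ suppliesOf M)}
      ≤ (lam * μterm + (1 - lam) * Bterm) / c := by
    apply Real.sSup_le
    · rintro r ⟨M, hM, rfl⟩
      rw [le_div_iff₀ hc0, mul_comm]
      exact hmain M hM
    · apply div_nonneg _ (le_of_lt hc0)
      have h1 : 0 ≤ lam * μterm := mul_nonneg (le_of_lt hlam0) hμterm0
      have h2 : 0 ≤ (1 - lam) * Bterm := mul_nonneg (by linarith) hBterm0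
      linarith
  have := mul_le_mul_of_nonneg_left hsup (le_of_lt hc0)
  rw [mul_div_cancel₀ _ (ne_of_gt hc0)] at this
  linarith
end

section
/- Let λ = 1/(e−1). For all real numbers s, k ∈ [0,1] with 0 < s + k ≤ 1, 1 − (λ·s·k + (1/e)·(1−λ)·k)/(s+k) ≥ 1 − 1/e + 1/e²; moreover equality holds at s = 1/e and k = 1 − 1/e. That is, the minimum of 1 − (λ·s·k + (1/e)·(1−λ)·k)/(s+k) over {(s,k) ∈ [0,1]² : 0 < s+k ≤ 1} equals 1 − 1/e + 1/e² ≈ 0.7674. -/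
/-! With `λ = 1/(E-1)`, clearing denominators turns `ratio ≤ 1/E - 1/E²` into the nonnegativity
of `(E-1)² s + k - E² s k`. This is affine in `k`, equal to `(E-1)² s` at `k = 0` and to
`(E s - 1)²` at `k = 1 - s`, hence nonnegative on the whole feasible region; it vanishes at
`s = 1/E`, `k = 1 - 1/E`, where the bound is attained. Only `E > 1` matters, not `E = e`. -/

namespace FactorRevealing

/-- The ratio of the factor-revealing program, with `E` in place of `e` and `λ = 1/(E-1)`. -/
noncomputable def ratio (E s k : ℝ) : ℝ :=
  ((1 / (E - 1)) * s * k + (1 / E) * (1 - 1 / (E - 1)) * k) / (s + k)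

theorem slack_nonneg {E s k : ℝ} (hs : 0 ≤ s) (hk : 0 ≤ k) (hsk : s + k ≤ 1) :
    0 ≤ (E - 1) ^ 2 * s + k - E ^ 2 * s * k := by
  rcases hsk.lt_or_eq with hlt | heq
  · have hs1 : 0 < 1 - s := by linarith
    have hinterp : (1 - s) * ((E - 1) ^ 2 * s + k - E ^ 2 * s * k)
        = (1 - s - k) * ((E - 1) ^ 2 * s) + k * (E * s - 1) ^ 2 := by ring
    refine (mul_nonneg_iff_of_pos_left hs1).mp ?_
    rw [hinterp]
    have : 0 ≤ 1 - s - k := by linarith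
    positivity
  · obtain rfl : k = 1 - s := by linarith
    have hend : (E - 1) ^ 2 * s + (1 - s) - E ^ 2 * s * (1 - s) = (E * s - 1) ^ 2 := by ring
    rw [hend]
    positivity

theorem ratio_le {E s k : ℝ} (hE : 1 < E) (hs : 0 ≤ s) (hk : 0 ≤ k) (hpos : 0 < s + k)
    (hsk : s + k ≤ 1) : ratio E s k ≤ 1 / E - 1 / E ^ 2 := by
  have hE0 : 0 < E := by linarith
  have hE1 : 0 < E - 1 := by linarith
  have hgap : (1 / E - 1 / E ^ 2) * (s + k)
        - ((1 / (E - 1)) * s * k + (1 / E) * (1 - 1 / (E - 1)) * k)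
      = ((E - 1) ^ 2 * s + k - E ^ 2 * s * k) / (E ^ 2 * (E - 1)) := by
    field_simp
    ring
  have hslack := slack_nonneg (E := E) hs hk hsk
  rw [ratio, div_le_iff₀ hpos, ← sub_nonneg, hgap]
  positivity

theorem ratio_inv_one_sub_inv {E : ℝ} (hE : 1 < E) :
    ratio E (1 / E) (1 - 1 / E) = 1 / E - 1 / E ^ 2 := by
  have hE0 : E ≠ 0 := by positivity
  have hE1 : E - 1 ≠ 0 := by linarith
  rw [ratio, add_sub_cancel]
  field_simp
  ring

end FactorRevealing

open FactorRevealing in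
/-- **Closed-form evaluation of the final factor-revealing program (unweighted case).**
With `λ = 1/(e−1)`: for all `s, k ∈ [0,1]` with `0 < s + k ≤ 1`,
`1 − (λ·s·k + (1/e)·(1−λ)·k)/(s+k) ≥ 1 − 1/e + 1/e²`; equality holds at
`s = 1/e`, `k = 1 − 1/e`; and hence the minimum over the feasible region equals
`1 − 1/e + 1/e² ≈ 0.7674`. -/
theorem factor_revealing_unweighted_value :
    (∀ s k : ℝ, 0 ≤ s → s ≤ 1 → 0 ≤ k → k ≤ 1 → 0 < s + k → s + k ≤ 1 →
      1 - ((1 / (Real.exp 1 - 1)) * s * k +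
          (1 / Real.exp 1) * (1 - 1 / (Real.exp 1 - 1)) * k) / (s + k) ≥
        1 - 1 / Real.exp 1 + 1 / Real.exp 1 ^ 2) ∧
    (1 - ((1 / (Real.exp 1 - 1)) * (1 / Real.exp 1) * (1 - 1 / Real.exp 1) +
          (1 / Real.exp 1) * (1 - 1 / (Real.exp 1 - 1)) * (1 - 1 / Real.exp 1)) /
          (1 / Real.exp 1 + (1 - 1 / Real.exp 1)) =
      1 - 1 / Real.exp 1 + 1 / Real.exp 1 ^ 2) ∧
    IsLeast
      {r : ℝ | ∃ s k : ℝ, 0 ≤ s ∧ s ≤ 1 ∧ 0 ≤ k ∧ k ≤ 1 ∧ 0 < s + k ∧ s + k ≤ 1 ∧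
        r = 1 - ((1 / (Real.exp 1 - 1)) * s * k +
          (1 / Real.exp 1) * (1 - 1 / (Real.exp 1 - 1)) * k) / (s + k)}
      (1 - 1 / Real.exp 1 + 1 / Real.exp 1 ^ 2) := by
  have hE : 1 < Real.exp 1 := Real.one_lt_exp_iff.mpr one_pos
  have hbound (s k : ℝ) (hs : 0 ≤ s) (hk : 0 ≤ k) (hpos : 0 < s + k) (hsk : s + k ≤ 1) :
      1 - 1 / Real.exp 1 + 1 / Real.exp 1 ^ 2 ≤ 1 - ratio (Real.exp 1) s k := by
    linarith [ratio_le hE hs hk hpos hsk]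
  have hattained : 1 - ratio (Real.exp 1) (1 / Real.exp 1) (1 - 1 / Real.exp 1)
      = 1 - 1 / Real.exp 1 + 1 / Real.exp 1 ^ 2 := by
    rw [ratio_inv_one_sub_inv hE]
    ring
  have hinv : 1 / Real.exp 1 < 1 := (div_lt_one (by positivity)).mpr hE
  have hinv0 : 0 < 1 / Real.exp 1 := by positivity
  refine ⟨fun s k hs _ hk _ hpos hsk => hbound s k hs hk hpos hsk, hattained,
    ⟨1 / Real.exp 1, 1 - 1 / Real.exp 1, hinv0.le, hinv.le, by linarith, by linarith,
      by linarith, by linarith, hattained.symm⟩, ?_⟩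
  rintro r ⟨s, k, hs, -, hk, -, hpos, hsk, rfl⟩
  exact hbound s k hs hk hpos hsk
end

section
/- Let D' and S' be finite sets, let w_j > 0 for each j ∈ S', let x: D' × S' → ℝ be nonnegative, and let c ∈ ℝ be such that w_j·(1 − Σ_{i∈D'} x_{ij}) = c for every j ∈ S' and Σ_{j∈S'} x_{ij} = 1 for every i ∈ D'. Then c = (|S'| − |D'|) / (Σ_{j∈S'} 1/w_j). In particular, in the structural decomposition of Lemma 1, the common value of each pair satisfies c^(l) = (|S^(l)| − |D^(l)|) / Σ_{j∈S^(l)} 1/w_j. -/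
open scoped BigOperators

/-- **Lemma 3 (closed form for `c^(l)`).**
If `w_j·(1 − Σ_{i∈D'} x_{ij}) = c` for every `j ∈ S'` and `Σ_{j∈S'} x_{ij} = 1` for every
`i ∈ D'`, then `c = (|S'| − |D'|) / Σ_{j∈S'} 1/w_j`.
(The supply side `S'` is nonempty, as required for the right-hand side to be meaningful.) -/
theorem closed_form_common_value
    {D S : Type*} (D' : Finset D) (S' : Finset S) (hS' : S'.Nonempty)
    (w : S → ℝ) (hw : ∀ j ∈ S', 0 < w j)
    (x : D → S → ℝ) (hx : ∀ i j, 0 ≤ x i j)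
    (c : ℝ)
    (hc : ∀ j ∈ S', w j * (1 - ∑ i ∈ D', x i j) = c)
    (hsat : ∀ i ∈ D', ∑ j ∈ S', x i j = 1) :
    c = ((S'.card : ℝ) - (D'.card : ℝ)) / ∑ j ∈ S', 1 / w j := by
  have hwpos : 0 < ∑ j ∈ S', 1 / w j :=
    Finset.sum_pos (fun j hj => one_div_pos.mpr (hw j hj)) hS'
  have key : ∑ j ∈ S', (1 - ∑ i ∈ D', x i j) = c * ∑ j ∈ S', 1 / w j := by
    rw [Finset.mul_sum]
    refine Finset.sum_congr rfl fun j hj => ?_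
    have h := hc j hj
    have hwj := (hw j hj).ne'
    field_simp
    linarith [h]
  have hsum : ∑ j ∈ S', (1 - ∑ i ∈ D', x i j)
      = (S'.card : ℝ) - (D'.card : ℝ) := by
    rw [Finset.sum_sub_distrib, Finset.sum_comm]
    simp [Finset.sum_congr rfl hsat]
  rw [eq_div_iff hwpos.ne', ← key, hsum]
end
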